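/- arXiv:2504.14853 — 7 statements merged into one kernel-verified Lean document; each statement's English description precedes it below -/
import Mathlib

section
/- Let S be a real 2×2 matrix, q, τ real numbers, p₂, p₄ real 1×2 row vectors, and p₁ : [0,1] → ℝ^{1×2} a continuous function. Then there exists a unique twice continuously differentiable function Π : [0,1] → ℝ^{1×2} satisfying the regulator equations: Π''(x) = Π(x)·S² − p₁(x) for all x ∈ [0,1], Π'(0) = −q·Π(0) + p₂, and Π(0) = p₄·exp(τS). -/
/- STATEMENT 0: existence and uniqueness of the solution Π of the regulator
equations Π'' = Π S² − p₁, Π'(0) = −q Π(0) + p₂, Π(0) = p₄ exp(τS) on [0,1].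
Row vectors in ℝ^{1×2} are `Matrix (Fin 1) (Fin 2) ℝ`; derivatives are taken
within [0,1] (entrywise); `NormedSpace.exp ℝ` is the matrix exponential. -/

attribute [local instance] Matrix.normedAddCommGroup Matrix.normedSpace

open Set Matrix

/-- `Π` is a twice continuously differentiable solution on `[0,1]` of the
regulator equations. -/
def IsRegulatorSolution (S : Matrix (Fin 2) (Fin 2) ℝ) (q τ : ℝ)
    (p₁ : ℝ → Matrix (Fin 1) (Fin 2) ℝ) (p₂ p₄ : Matrix (Fin 1) (Fin 2) ℝ)
    (P : ℝ → Matrix (Fin 1) (Fin 2) ℝ) : Prop :=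
  ContDiffOn ℝ 2 P (Icc 0 1) ∧
  (∀ x ∈ Icc (0:ℝ) 1,
    derivWithin (derivWithin P (Icc 0 1)) (Icc 0 1) x = P x * S ^ 2 - p₁ x) ∧
  derivWithin P (Icc 0 1) 0 = (-q) • P 0 + p₂ ∧
  P 0 = p₄ * NormedSpace.exp (τ • S)



noncomputable section RegAux

abbrev RegM := Matrix (Fin 1) (Fin 2) ℝ
abbrev RegE := RegM × RegM

instance (priority := high) regTopologicalSpace : TopologicalSpace RegE :=
  (inferInstance : NormedAddCommGroup RegE).toUniformSpace.toTopologicalSpace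

instance (priority := high) regUniformSpace : UniformSpace RegE :=
  (inferInstance : NormedAddCommGroup RegE).toUniformSpace


noncomputable def regA (S : Matrix (Fin 2) (Fin 2) ℝ) : RegE →L[ℝ] RegE :=
  LinearMap.toContinuousLinearMap
  { toFun := fun p => (p.2, p.1 * S ^ 2)
    map_add' := fun a b => by simp [Matrix.add_mul]
    map_smul' := fun c a => by simp [Matrix.smul_mul] }

lemma regA_apply (S : Matrix (Fin 2) (Fin 2) ℝ) (p : RegE) :
    regA S p = (p.2, p.1 * S ^ 2) := rfl

lemma exp_smul_mul_exp_neg_smul {𝔸 : Type*} [NormedRing 𝔸] [NormedAlgebra ℝ 𝔸]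
    [CompleteSpace 𝔸] (x : 𝔸) (t : ℝ) :
    NormedSpace.exp (t • x) * NormedSpace.exp (-t • x) = 1 := by
  letI : NormedAlgebra ℚ 𝔸 := .restrictScalars ℚ ℝ 𝔸
  rw [← NormedSpace.exp_add_of_commute (((Commute.refl x).smul_left t).smul_right (-t))]
  rw [← add_smul]
  simp [NormedSpace.exp_zero]

lemma exp_smul_mul_exp_smul_neg {𝔸 : Type*} [NormedRing 𝔸] [NormedAlgebra ℝ 𝔸]
    [CompleteSpace 𝔸] (x : 𝔸) (t : ℝ) :
    NormedSpace.exp (t • x) * NormedSpace.exp (t • (-x)) = 1 := by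
  letI : NormedAlgebra ℚ 𝔸 := .restrictScalars ℚ ℝ 𝔸
  rw [← NormedSpace.exp_add_of_commute (((Commute.refl x).neg_right).smul_left t |>.smul_right t)]
  rw [← smul_add]
  simp [NormedSpace.exp_zero]

open NormedSpace in
theorem regulator_exists
    (S : Matrix (Fin 2) (Fin 2) ℝ) (q τ : ℝ)
    (p₂ p₄ : Matrix (Fin 1) (Fin 2) ℝ)
    (p₁ : ℝ → Matrix (Fin 1) (Fin 2) ℝ)
    (hp₁ : ContinuousOn p₁ (Icc 0 1)) :
    ∃ P : ℝ → Matrix (Fin 1) (Fin 2) ℝ, IsRegulatorSolution S q τ p₁ p₂ p₄ P := by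
  classical
  set A : RegE →L[ℝ] RegE := regA S with hA
  set pe : ℝ → RegM := fun t => p₁ ((projIcc (0:ℝ) 1 zero_le_one t : Icc (0:ℝ) 1) : ℝ) with hpe
  have hpe_cont : Continuous pe := by
    exact hp₁.comp_continuous (continuous_subtype_val.comp continuous_projIcc)
      (fun x => Subtype.coe_prop _)
  have hpe_eq : ∀ x ∈ Icc (0:ℝ) 1, pe x = p₁ x := by
    intro x hx
    simp [hpe, projIcc_of_mem zero_le_one hx]
  set c : RegM := p₄ * exp (τ • S) with hc
  set Y₀ : RegE := (c, (-q) • c + p₂) with hY₀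
  set b : ℝ → RegE := fun t => (0, -pe t) with hb
  have hb_cont : Continuous b := continuous_const.prodMk hpe_cont.neg
  set g : ℝ → RegE := fun t => (exp (-t • A)) (b t) with hg
  have hg_cont : Continuous g := by
    letI : NormedAlgebra ℚ (RegE →L[ℝ] RegE) := .restrictScalars ℚ ℝ _
    have h1 : Continuous fun t : ℝ => exp (-t • A) :=
      (exp_continuous).comp ((continuous_neg.comp continuous_id).smul continuous_const)
    exact h1.clm_apply hb_cont
  set v : ℝ → RegE := fun t => Y₀ + ∫ s in (0:ℝ)..t, g s with hv
  have hv_deriv : ∀ t : ℝ, HasDerivAt v (g t) t := by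
    intro t
    have := (intervalIntegral.integral_hasDerivAt_right
      (hg_cont.intervalIntegrable 0 t)
      (hg_cont.stronglyMeasurableAtFilter _ _) hg_cont.continuousAt)
    exact this.const_add Y₀
  set Y : ℝ → RegE := fun t => (exp (t • A)) (v t) with hYdef
  have hY : ∀ t : ℝ, HasDerivAt Y (A (Y t) + b t) t := by
    intro t
    have h1 : HasDerivAt (fun u : ℝ => exp (u • A)) (A * exp (t • A)) t :=
      hasDerivAt_exp_smul_const' A t
    have h2 := h1.clm_apply (hv_deriv t)
    refine h2.congr_deriv ?_
    have e1 : (A * exp (t • A)) (v t) = A (Y t) := rfl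
    have e2 : (exp (t • A)) (g t) = b t := by
      calc (exp (t • A)) ((exp (-t • A)) (b t))
          = (exp (t • A) * exp (-t • A)) (b t) := rfl
        _ = b t := by
            have h3 := exp_smul_mul_exp_neg_smul (𝔸 := RegE →L[ℝ] RegE) A t
            rw [h3]; simp
    rw [e1, e2]
  -- initial value
  have hY0 : Y 0 = Y₀ := by
    simp only [hYdef, hv, zero_smul, intervalIntegral.integral_same, add_zero,
      NormedSpace.exp_zero, ContinuousLinearMap.one_apply]
  set P : ℝ → RegM := fun t => (Y t).1 with hPdef
  set Q : ℝ → RegM := fun t => (Y t).2 with hQdef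
  have hYdiff : Differentiable ℝ Y := fun t => (hY t).differentiableAt
  have hYc : Continuous Y := hYdiff.continuous
  have hP : ∀ t, HasDerivAt P (Q t) t := by
    intro t
    have h := (ContinuousLinearMap.fst ℝ RegM RegM).hasFDerivAt.comp_hasDerivAt t (hY t)
    refine h.congr_deriv ?_
    show (A (Y t) + b t).1 = Q t
    simp [hA, regA_apply, hb, hQdef]
  have hQ' : ∀ t, HasDerivAt Q (P t * S ^ 2 - pe t) t := by
    intro t
    have h := (ContinuousLinearMap.snd ℝ RegM RegM).hasFDerivAt.comp_hasDerivAt t (hY t)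
    refine h.congr_deriv ?_
    show (A (Y t) + b t).2 = P t * S ^ 2 - pe t
    simp [hA, regA_apply, hb, hPdef, sub_eq_add_neg]
  have hderivP : deriv P = Q := funext fun t => (hP t).deriv
  have hderivQ : deriv Q = fun t => P t * S ^ 2 - pe t := funext fun t => (hQ' t).deriv
  have hPc2 : ContDiff ℝ 2 P := by
    rw [show (2 : WithTop ℕ∞) = 1 + 1 from rfl, contDiff_succ_iff_deriv]
    refine ⟨fun t => (hP t).differentiableAt, by simp, ?_⟩
    erw [hderivP, contDiff_one_iff_deriv]
    refine ⟨fun t => (hQ' t).differentiableAt, ?_⟩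
    erw [hderivQ]
    exact (hYc.fst.matrix_mul continuous_const).sub hpe_cont
  have hud : UniqueDiffOn ℝ (Icc (0:ℝ) 1) := uniqueDiffOn_Icc zero_lt_one
  have hdw : ∀ x ∈ Icc (0:ℝ) 1, derivWithin P (Icc 0 1) x = Q x := fun x hx =>
    ((hP x).hasDerivWithinAt).derivWithin (hud x hx)
  refine ⟨P, hPc2.contDiffOn, ?_, ?_, ?_⟩
  · intro x hx
    have h1 : derivWithin (derivWithin P (Icc 0 1)) (Icc 0 1) x
        = derivWithin Q (Icc 0 1) x := derivWithin_congr hdw (hdw x hx)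
    erw [h1, ((hQ' x).hasDerivWithinAt).derivWithin (hud x hx), hpe_eq x hx]
  · rw [hdw 0 ⟨le_refl 0, zero_le_one⟩]
    have hp0 : P 0 = c := by simp [hPdef, hY0, hY₀]
    have hq0 : Q 0 = (-q) • c + p₂ := by simp [hQdef, hY0, hY₀]
    rw [hq0, hp0]
  · simp [hPdef, hY0, hY₀, hc]

open NormedSpace in
theorem regulator_unique
    (S : Matrix (Fin 2) (Fin 2) ℝ) (q τ : ℝ)
    (p₂ p₄ : Matrix (Fin 1) (Fin 2) ℝ)
    (p₁ : ℝ → Matrix (Fin 1) (Fin 2) ℝ)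
    (P₁ P₂ : ℝ → Matrix (Fin 1) (Fin 2) ℝ)
    (h1 : IsRegulatorSolution S q τ p₁ p₂ p₄ P₁)
    (h2 : IsRegulatorSolution S q τ p₁ p₂ p₄ P₂) :
    EqOn P₁ P₂ (Icc 0 1) := by
  classical
  set A : RegE →L[ℝ] RegE := regA S with hA
  have hud : UniqueDiffOn ℝ (Icc (0:ℝ) 1) := uniqueDiffOn_Icc zero_lt_one
  have key : ∀ P, IsRegulatorSolution S q τ p₁ p₂ p₄ P →
      ∀ t ∈ Icc (0:ℝ) 1,
        HasDerivWithinAt (fun u => ((P u, derivWithin P (Icc 0 1) u) : RegE))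
          (A (P t, derivWithin P (Icc 0 1) t) + (0, -p₁ t)) (Icc 0 1) t := by
    rintro P ⟨hcd, hode, -, -⟩ t ht
    have hd1 : DifferentiableOn ℝ P (Icc 0 1) := hcd.differentiableOn two_ne_zero
    have hP'cd : ContDiffOn ℝ 1 (derivWithin P (Icc 0 1)) (Icc 0 1) :=
      hcd.derivWithin hud (by norm_num)
    have hd2 : DifferentiableOn ℝ (derivWithin P (Icc 0 1)) (Icc 0 1) :=
      hP'cd.differentiableOn one_ne_zero
    have hPd := (hd1 t ht).hasDerivWithinAt
    have hQd := (hd2 t ht).hasDerivWithinAt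
    replace hQd := hQd.congr_deriv (hode t ht)
    have h := hPd.prodMk hQd
    refine h.congr_deriv ?_
    simp [hA, regA_apply, sub_eq_add_neg, Prod.ext_iff]
    rfl
  set Z : ℝ → RegE := fun u =>
    ((P₁ u, derivWithin P₁ (Icc 0 1) u) : RegE) - (P₂ u, derivWithin P₂ (Icc 0 1) u) with hZdef
  have hZ : ∀ t ∈ Icc (0:ℝ) 1, HasDerivWithinAt Z (A (Z t)) (Icc 0 1) t := by
    intro t ht
    have h := (key P₁ h1 t ht).sub (key P₂ h2 t ht)
    refine h.congr_deriv ?_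
    rw [hZdef]; simp only [map_sub]; abel
  set W : ℝ → RegE := fun u => (exp (u • (-A))) (Z u) with hWdef
  have hW : ∀ t ∈ Icc (0:ℝ) 1, HasDerivWithinAt W 0 (Icc 0 1) t := by
    intro t ht
    have h1' : HasDerivAt (fun u : ℝ => exp (u • (-A))) ((-A) * exp (t • (-A))) t :=
      hasDerivAt_exp_smul_const' (-A) t
    have h2' := (h1'.hasDerivWithinAt).clm_apply (hZ t ht)
    have hcm : Commute A (exp (t • (-A))) :=
      ((((Commute.refl A).neg_right).smul_right t).exp_right)
    have hsum : ((-A) * exp (t • (-A))) (Z t) + (exp (t • (-A))) (A (Z t)) = 0 := by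
      have e1 : ((-A) * exp (t • (-A))) (Z t)
          = -(A ((exp (t • (-A))) (Z t))) := by
        rw [ContinuousLinearMap.mul_apply, ContinuousLinearMap.neg_apply]
      have e2 : (exp (t • (-A))) (A (Z t)) = A ((exp (t • (-A))) (Z t)) := by
        calc (exp (t • (-A))) (A (Z t)) = (exp (t • (-A)) * A) (Z t) := by
              rw [ContinuousLinearMap.mul_apply]
          _ = (A * exp (t • (-A))) (Z t) := by rw [hcm.eq]
          _ = A ((exp (t • (-A))) (Z t)) := by rw [ContinuousLinearMap.mul_apply]
      rw [e1, e2]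
      exact neg_add_cancel _
    refine h2'.congr_deriv ?_
    exact hsum
  have hWdiff : DifferentiableOn ℝ W (Icc 0 1) :=
    fun x hx => ((hW x hx).differentiableWithinAt)
  have hfd : ∀ x ∈ Icc (0:ℝ) 1, fderivWithin ℝ W (Icc 0 1) x = 0 := by
    intro x hx
    have hfw := (hW x hx).hasFDerivWithinAt
    rw [hfw.fderivWithin (hud x hx)]
    refine ContinuousLinearMap.ext fun u => ?_
    rw [ContinuousLinearMap.toSpanSingleton_apply]
    simp
  have hW0 : W 0 = 0 := by
    have h0 : Z 0 = 0 := by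
      obtain ⟨-, -, hd1, hi1⟩ := h1
      obtain ⟨-, -, hd2, hi2⟩ := h2
      rw [hZdef]
      simp only [sub_eq_zero, Prod.mk.injEq]
      constructor
      · rw [hi1, hi2]
      · rw [hd1, hd2, hi1, hi2]
    rw [hWdef]
    simp only [h0, map_zero]
  intro x hx
  have hconst : W x = W 0 :=
    (convex_Icc (0:ℝ) 1).is_const_of_fderivWithin_eq_zero hWdiff hfd hx
      ⟨le_refl 0, zero_le_one⟩
  have hWx : W x = 0 := by rw [hconst, hW0]
  have hZx : Z x = 0 := by
    have h3 := congrArg (fun z => (exp (x • A)) z) hWx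
    simp only [hWdef] at h3
    calc Z x = (exp (x • A) * exp (x • (-A))) (Z x) := by
          rw [exp_smul_mul_exp_smul_neg (𝔸 := RegE →L[ℝ] RegE) A x]; simp
      _ = (exp (x • A)) ((exp (x • (-A))) (Z x)) := by
          rw [ContinuousLinearMap.mul_apply]
      _ = 0 := by rw [h3]; simp
  have := congrArg Prod.fst hZx
  simpa [hZdef, sub_eq_zero] using this


theorem regulator_equations_existence_uniqueness
    (S : Matrix (Fin 2) (Fin 2) ℝ) (q τ : ℝ)
    (p₂ p₄ : Matrix (Fin 1) (Fin 2) ℝ)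
    (p₁ : ℝ → Matrix (Fin 1) (Fin 2) ℝ)
    (hp₁ : ContinuousOn p₁ (Icc 0 1)) :
    (∃ P : ℝ → Matrix (Fin 1) (Fin 2) ℝ, IsRegulatorSolution S q τ p₁ p₂ p₄ P) ∧
    (∀ P₁ P₂ : ℝ → Matrix (Fin 1) (Fin 2) ℝ,
      IsRegulatorSolution S q τ p₁ p₂ p₄ P₁ →
      IsRegulatorSolution S q τ p₁ p₂ p₄ P₂ →
      EqOn P₁ P₂ (Icc 0 1)) := by
  exact ⟨regulator_exists S q τ p₂ p₄ p₁ hp₁,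
    fun P₁ P₂ h1 h2 => regulator_unique S q τ p₂ p₄ p₁ P₁ P₂ h1 h2⟩
end RegAux
end

section
/- Let q, c₀ be real numbers and ε : [0,1] → ℝ a continuous function. Define ε̄(x) = ε(x) + (c₀+q)∫₀ˣ e^{q(x−h)} ε(h) dh for x ∈ [0,1]. Then for every x ∈ [0,1], ε(x) = ε̄(x) − (c₀+q)∫₀ˣ e^{−c₀(x−h)} ε̄(h) dh. -/
/-!
Write `V_a f x = ∫₀ˣ e^{a(x-h)} f(h) dh`. For continuous `f`, `V_a f` is the unique solution of
`y' = a y + f` with `y(0) = 0`. Put `ε̄ = ε + (c₀+q) V_q ε`. Then `y = V_q ε` satisfies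
`y' = q y + ε = -c₀ y + ε̄`, so `V_{-c₀} ε̄ = V_q ε`, and hence `ε̄ - (c₀+q) V_{-c₀} ε̄ = ε`.
On `[0,1]` we reduce to this case by extending `ε` continuously to `ℝ`.
-/

open Set

noncomputable def expVolterra (a : ℝ) (f : ℝ → ℝ) (x : ℝ) : ℝ :=
  ∫ h in (0:ℝ)..x, Real.exp (a * (x - h)) * f h

namespace expVolterra

variable {a : ℝ} {f : ℝ → ℝ}

theorem eq_exp_mul_integral (a : ℝ) (f : ℝ → ℝ) (x : ℝ) :
    expVolterra a f x = Real.exp (a * x) * ∫ h in (0:ℝ)..x, Real.exp (-(a * h)) * f h := by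
  rw [expVolterra, ← intervalIntegral.integral_const_mul]
  congr 1
  ext h
  rw [← mul_assoc, ← Real.exp_add, mul_sub, sub_eq_add_neg]

theorem congr_of_eqOn {g : ℝ → ℝ} {x : ℝ} (h : EqOn f g (uIcc 0 x)) :
    expVolterra a f x = expVolterra a g x :=
  intervalIntegral.integral_congr fun t ht => by simp only [h ht]

theorem zero_right (a : ℝ) (f : ℝ → ℝ) : expVolterra a f 0 = 0 :=
  intervalIntegral.integral_same

theorem hasDerivAt (hf : Continuous f) (x : ℝ) :
    HasDerivAt (expVolterra a f) (a * expVolterra a f x + f x) x := by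
  have hF : HasDerivAt (fun y => ∫ h in (0:ℝ)..y, Real.exp (-(a * h)) * f h)
      (Real.exp (-(a * x)) * f x) x :=
    (Continuous.integral_hasStrictDerivAt (by fun_prop) 0 x).hasDerivAt
  have hE : HasDerivAt (fun y => Real.exp (a * y)) (Real.exp (a * x) * (a * 1)) x :=
    ((hasDerivAt_id x).const_mul a).exp
  rw [show expVolterra a f = _ from funext (eq_exp_mul_integral a f)]
  refine (hE.mul hF).congr_deriv ?_
  have hinv : Real.exp (a * x) * Real.exp (-(a * x)) = 1 := by
    rw [← Real.exp_add, add_neg_cancel, Real.exp_zero]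
  linear_combination f x * hinv

theorem continuous (hf : Continuous f) : Continuous (expVolterra a f) :=
  continuous_iff_continuousAt.2 fun x => (hasDerivAt hf x).continuousAt

/-- Uniqueness: `e^{-ax} y(x)` has derivative `e^{-ax} u(x)`, so it equals `∫₀ˣ e^{-ah} u(h) dh`. -/
theorem eq_of_hasDerivAt {y u : ℝ → ℝ} (hu : Continuous u)
    (hy : ∀ x, HasDerivAt y (a * y x + u x) x) (hy0 : y 0 = 0) (x : ℝ) :
    y x = expVolterra a u x := by
  have hz : ∀ t, HasDerivAt (fun t => Real.exp (-(a * t)) * y t)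
      (Real.exp (-(a * t)) * u t) t := fun t => by
    have hE : HasDerivAt (fun t => Real.exp (-(a * t))) (Real.exp (-(a * t)) * -(a * 1)) t :=
      ((hasDerivAt_id t).const_mul a).neg.exp
    refine (hE.mul (hy t)).congr_deriv ?_
    ring
  have hFTC := intervalIntegral.integral_eq_sub_of_hasDerivAt (fun t _ => hz t)
    ((by fun_prop : Continuous fun t => Real.exp (-(a * t)) * u t).intervalIntegrable 0 x)
  rw [eq_exp_mul_integral, hFTC, hy0, mul_zero, sub_zero, ← mul_assoc, ← Real.exp_add,
    add_neg_cancel, Real.exp_zero, one_mul]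

theorem left_inverse {q c : ℝ} (hf : Continuous f) (x : ℝ) :
    f x = (f x + (c + q) * expVolterra q f x)
      - (c + q) * expVolterra (-c) (fun y => f y + (c + q) * expVolterra q f y) x := by
  have hg : Continuous fun y => f y + (c + q) * expVolterra q f y :=
    hf.add (continuous_const.mul (continuous hf))
  -- `V_q f` solves `y' = -c y + (f + (c+q) V_q f)`, since `-c y + (c+q) y = q y`.
  have hV := eq_of_hasDerivAt (a := -c) hg
    (fun y => (hasDerivAt (a := q) hf y).congr_deriv (by ring)) (zero_right q f) x
  rw [← hV]
  ring

end expVolterra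

theorem volterra_backstepping_inverse (q c₀ : ℝ) (ε : ℝ → ℝ)
    (hε : ContinuousOn ε (Icc 0 1))
    (εbar : ℝ → ℝ)
    (hεbar : ∀ x ∈ Icc (0:ℝ) 1,
      εbar x = ε x + (c₀ + q) * ∫ h in (0:ℝ)..x, Real.exp (q * (x - h)) * ε h) :
    ∀ x ∈ Icc (0:ℝ) 1,
      ε x = εbar x - (c₀ + q) * ∫ h in (0:ℝ)..x, Real.exp (-c₀ * (x - h)) * εbar h := by
  intro x hx
  set ε' : ℝ → ℝ := fun y => ε (projIcc 0 1 zero_le_one y)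
  have hε' : Continuous ε' :=
    hε.comp_continuous continuous_projIcc.subtype_val fun y => (projIcc 0 1 _ y).2
  have hεε' : EqOn ε ε' (Icc 0 1) := fun y hy => by simp only [ε', projIcc_of_mem _ hy]
  have hsub : ∀ y ∈ Icc (0:ℝ) 1, uIcc 0 y ⊆ Icc 0 1 :=
    fun y hy => uIcc_subset_Icc (left_mem_Icc.2 zero_le_one) hy
  have hbar : EqOn εbar (fun y => ε' y + (c₀ + q) * expVolterra q ε' y) (Icc 0 1) :=
    fun y hy => by
      rw [hεbar y hy, hεε' hy]
      exact congrArg _ (congrArg _ (expVolterra.congr_of_eqOn (hεε'.mono (hsub y hy))))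
  change ε x = εbar x - (c₀ + q) * expVolterra (-c₀) εbar x
  rw [expVolterra.congr_of_eqOn (hbar.mono (hsub x hx)), hbar hx, hεε' hx]
  exact expVolterra.left_inverse hε' x
end

section
/- Let q, c₀ be real numbers and w : [0,1] × [0,∞) → ℝ twice continuously differentiable. Suppose w_tt(x,t) = w_xx(x,t) for all (x,t) ∈ (0,1) × (0,∞) and w_x(0,t) = −q·w(0,t) for all t ≥ 0. Define ε̄(x,t) = w(x,t) + (c₀+q)∫₀ˣ e^{q(x−h)} w(h,t) dh. Then ε̄_tt(x,t) = ε̄_xx(x,t) for all (x,t) ∈ (0,1) × (0,∞) and ε̄_x(0,t) = c₀·ε̄(0,t) for all t ≥ 0. -/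
/- STATEMENT 3: the Volterra backstepping transformation
ε̄(x,t) = w(x,t) + (c₀+q)∫₀ˣ e^{q(x−h)} w(h,t) dh maps a classical (C²) solution of
w_tt = w_xx on (0,1)×(0,∞) with w_x(0,t) = −q w(0,t) for t ≥ 0 into a solution of
ε̄_tt = ε̄_xx on (0,1)×(0,∞) with ε̄_x(0,t) = c₀ ε̄(0,t) for t ≥ 0.
Here w x t is the value at space point x and time t; "twice continuously
differentiable" is formalized as w being (the restriction of) a C² function. -/

open Set MeasureTheory intervalIntegral


noncomputable def bsPdx (f : ℝ × ℝ → ℝ) : ℝ × ℝ → ℝ := fun p => fderiv ℝ f p (1, 0)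
noncomputable def bsPdt (f : ℝ × ℝ → ℝ) : ℝ × ℝ → ℝ := fun p => fderiv ℝ f p (0, 1)

lemma bs_contDiff_pdx {f : ℝ × ℝ → ℝ} (hf : ContDiff ℝ 2 f) : ContDiff ℝ 1 (bsPdx f) :=
  (hf.fderiv_right (by norm_num)).clm_apply contDiff_const

lemma bs_contDiff_pdt {f : ℝ × ℝ → ℝ} (hf : ContDiff ℝ 2 f) : ContDiff ℝ 1 (bsPdt f) :=
  (hf.fderiv_right (by norm_num)).clm_apply contDiff_const

lemma bs_cont_pdx {f : ℝ × ℝ → ℝ} (hf : ContDiff ℝ 1 f) : Continuous (bsPdx f) :=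
  (hf.continuous_fderiv one_ne_zero).clm_apply continuous_const

lemma bs_cont_pdt {f : ℝ × ℝ → ℝ} (hf : ContDiff ℝ 1 f) : Continuous (bsPdt f) :=
  (hf.continuous_fderiv one_ne_zero).clm_apply continuous_const

lemma bs_hasDerivAt_pdx {f : ℝ × ℝ → ℝ} (hf : ContDiff ℝ 1 f) (x t : ℝ) :
    HasDerivAt (fun y => f (y, t)) (bsPdx f (x, t)) x :=
  ((hf.differentiable one_ne_zero (x, t)).hasFDerivAt).comp_hasDerivAt x
    ((hasDerivAt_id x).prodMk (hasDerivAt_const x t))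

lemma bs_hasDerivAt_pdt {f : ℝ × ℝ → ℝ} (hf : ContDiff ℝ 1 f) (x t : ℝ) :
    HasDerivAt (fun s => f (x, s)) (bsPdt f (x, t)) t :=
  ((hf.differentiable one_ne_zero (x, t)).hasFDerivAt).comp_hasDerivAt t
    ((hasDerivAt_const t x).prodMk (hasDerivAt_id t))

lemma bs_param_deriv {f f' : ℝ → ℝ → ℝ}
    (hf : Continuous (Function.uncurry f))
    (hf' : Continuous (Function.uncurry f'))
    (hd : ∀ h s, HasDerivAt (fun s => f h s) (f' h s) s)
    (a b t : ℝ) :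
    HasDerivAt (fun s => ∫ h in a..b, f h s) (∫ h in a..b, f' h t) t := by
  obtain ⟨C, hC⟩ := (isCompact_uIcc.prod (isCompact_closedBall t 1)).exists_bound_of_continuousOn
    (hf'.continuousOn (s := uIcc a b ×ˢ Metric.closedBall t 1))
  refine (intervalIntegral.hasDerivAt_integral_of_dominated_loc_of_deriv_le
    (F := fun s h => f h s) (F' := fun s h => f' h s) (bound := fun _ => C) (s := Metric.ball t 1)
    (Metric.ball_mem_nhds t one_pos) ?_ ?_ ?_ ?_ ?_ ?_).2
  · exact Filter.Eventually.of_forall fun s =>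
      (hf.comp (continuous_id.prodMk continuous_const)).aestronglyMeasurable
  · exact (hf.comp (continuous_id.prodMk continuous_const)).intervalIntegrable a b
  · exact (hf'.comp (continuous_id.prodMk continuous_const)).aestronglyMeasurable
  · refine Filter.Eventually.of_forall fun h hh s hs => hC (h, s) ?_
    exact ⟨uIoc_subset_uIcc hh, Metric.ball_subset_closedBall hs⟩
  · exact intervalIntegrable_const
  · exact Filter.Eventually.of_forall fun h _ s _ => hd h s

lemma bs_ibp (q x : ℝ) {v v' : ℝ → ℝ} (hv : ∀ h, HasDerivAt v (v' h) h)
    (hv' : Continuous v') :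
    ∫ h in (0:ℝ)..x, Real.exp (q * (x - h)) * v' h
      = v x - Real.exp (q * x) * v 0
        + q * ∫ h in (0:ℝ)..x, Real.exp (q * (x - h)) * v h := by
  have hu : ∀ h : ℝ, HasDerivAt (fun h => Real.exp (q * (x - h)))
      (Real.exp (q * (x - h)) * (-q)) h := by
    intro h
    have h1 : HasDerivAt (fun h : ℝ => q * (x - h)) (-q) h := by
      simpa using ((hasDerivAt_id h).const_sub x).const_mul q
    simpa using h1.exp
  have hvc : Continuous v := continuous_iff_continuousAt.2 fun h => (hv h).continuousAt
  have hue : Continuous fun h => Real.exp (q * (x - h)) :=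
    Real.continuous_exp.comp (continuous_const.mul (continuous_const.sub continuous_id))
  have key := intervalIntegral.integral_mul_deriv_eq_deriv_mul
    (a := 0) (b := x) (u := fun h => Real.exp (q * (x - h))) (v := v)
    (u' := fun h => Real.exp (q * (x - h)) * (-q)) (v' := v')
    (fun h _ => hu h) (fun h _ => hv h)
    ((hue.mul continuous_const).intervalIntegrable _ _)
    (hv'.intervalIntegrable _ _)
  have h2 : ∫ h in (0:ℝ)..x, (Real.exp (q * (x - h)) * (-q)) * v h
      = (-q) * ∫ h in (0:ℝ)..x, Real.exp (q * (x - h)) * v h := by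
    rw [← intervalIntegral.integral_const_mul]
    apply intervalIntegral.integral_congr
    intro h _
    ring
  rw [key, h2]
  simp only [sub_self, mul_zero, Real.exp_zero, one_mul, sub_zero]
  ring


theorem backstepping_transforms_wave (q c₀ : ℝ) (w : ℝ → ℝ → ℝ)
    (hw : ContDiff ℝ 2 (Function.uncurry w))
    (hwave : ∀ x ∈ Ioo (0:ℝ) 1, ∀ t ∈ Ioi (0:ℝ),
      deriv (deriv (w x)) t = deriv (deriv (fun y => w y t)) x)
    (hbc : ∀ t ∈ Ici (0:ℝ), deriv (fun y => w y t) 0 = -q * w 0 t)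
    (εbar : ℝ → ℝ → ℝ)
    (hεbar : ∀ x t : ℝ,
      εbar x t = w x t + (c₀ + q) * ∫ h in (0:ℝ)..x, Real.exp (q * (x - h)) * w h t) :
    (∀ x ∈ Ioo (0:ℝ) 1, ∀ t ∈ Ioi (0:ℝ),
      deriv (deriv (εbar x)) t = deriv (deriv (fun y => εbar y t)) x) ∧
    (∀ t ∈ Ici (0:ℝ), deriv (fun y => εbar y t) 0 = c₀ * εbar 0 t) := by
  have hw1 : ContDiff ℝ 1 (Function.uncurry w) := hw.of_le (by norm_num)
  have hA : ContDiff ℝ 1 (bsPdx (Function.uncurry w)) := bs_contDiff_pdx hw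
  have hB : ContDiff ℝ 1 (bsPdt (Function.uncurry w)) := bs_contDiff_pdt hw
  have contW : Continuous (Function.uncurry w) := hw.continuous
  have contA : Continuous (bsPdx (Function.uncurry w)) := hA.continuous
  have contB : Continuous (bsPdt (Function.uncurry w)) := hB.continuous
  have contA1 : Continuous (bsPdx (bsPdx (Function.uncurry w))) := bs_cont_pdx hA
  have contB2 : Continuous (bsPdt (bsPdt (Function.uncurry w))) := bs_cont_pdt hB
  have dWx : ∀ x t : ℝ, HasDerivAt (fun y => w y t) (bsPdx (Function.uncurry w) (x, t)) x :=
    fun x t => bs_hasDerivAt_pdx hw1 x t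
  have dWt : ∀ x t : ℝ, HasDerivAt (w x) (bsPdt (Function.uncurry w) (x, t)) t :=
    fun x t => bs_hasDerivAt_pdt hw1 x t
  have dAx : ∀ x t : ℝ, HasDerivAt (fun y => bsPdx (Function.uncurry w) (y, t))
      (bsPdx (bsPdx (Function.uncurry w)) (x, t)) x := fun x t => bs_hasDerivAt_pdx hA x t
  have dBt : ∀ x t : ℝ, HasDerivAt (fun s => bsPdt (Function.uncurry w) (x, s))
      (bsPdt (bsPdt (Function.uncurry w)) (x, t)) t := fun x t => bs_hasDerivAt_pdt hB x t
  -- wave equation for the partial derivatives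
  have hwave'' : ∀ x ∈ Ioo (0:ℝ) 1, ∀ t ∈ Ioi (0:ℝ),
      bsPdt (bsPdt (Function.uncurry w)) (x, t) = bsPdx (bsPdx (Function.uncurry w)) (x, t) := by
    intro x hx t ht
    have h1 : deriv (w x) = fun s => bsPdt (Function.uncurry w) (x, s) :=
      funext fun s => (dWt x s).deriv
    have h2 : deriv (fun y => w y t) = fun y => bsPdx (Function.uncurry w) (y, t) :=
      funext fun y => (dWx y t).deriv
    have h3 := hwave x hx t ht
    rw [h1, h2] at h3
    rw [← (dBt x t).deriv, ← (dAx x t).deriv]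
    exact h3
  -- rewriting the kernel integral
  have hIw : ∀ t y : ℝ, (∫ h in (0:ℝ)..y, Real.exp (q * (y - h)) * w h t)
      = Real.exp (q * y) * ∫ h in (0:ℝ)..y, Real.exp (-(q * h)) * w h t := by
    intro t y
    rw [← intervalIntegral.integral_const_mul]
    apply intervalIntegral.integral_congr
    intro h _
    show Real.exp (q * (y - h)) * w h t = Real.exp (q * y) * (Real.exp (-(q * h)) * w h t)
    rw [← mul_assoc, ← Real.exp_add]
    congr 2
    ring
  have hcancel : ∀ z c : ℝ, Real.exp (q * z) * (Real.exp (-(q * z)) * c) = c := by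
    intro z c
    rw [← mul_assoc, ← Real.exp_add]
    simp
  have contg : ∀ t : ℝ, Continuous fun h => Real.exp (-(q * h)) * w h t := fun t =>
    (Real.continuous_exp.comp (continuous_const.mul continuous_id).neg).mul
      (contW.comp (continuous_id.prodMk continuous_const))
  have hJ : ∀ t z : ℝ, HasDerivAt (fun z => ∫ h in (0:ℝ)..z, Real.exp (-(q * h)) * w h t)
      (Real.exp (-(q * z)) * w z t) z := fun t z =>
    intervalIntegral.integral_hasDerivAt_right ((contg t).intervalIntegrable _ _)
      ((contg t).stronglyMeasurableAtFilter _ _) (contg t).continuousAt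
  have he : ∀ y : ℝ, HasDerivAt (fun y : ℝ => Real.exp (q * y)) (Real.exp (q * y) * q) y := by
    intro y
    simpa using ((hasDerivAt_id y).const_mul q).exp
  -- first spatial derivative of εbar
  have dE1x : ∀ t y : ℝ, HasDerivAt (fun y => εbar y t)
      (bsPdx (Function.uncurry w) (y, t) + (c₀ + q) * (w y t
        + q * (Real.exp (q * y) * ∫ h in (0:ℝ)..y, Real.exp (-(q * h)) * w h t))) y := by
    intro t y
    have hfun : (fun y => εbar y t) = fun y => w y t
        + (c₀ + q) * (Real.exp (q * y) * ∫ h in (0:ℝ)..y, Real.exp (-(q * h)) * w h t) := by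
      funext z
      rw [hεbar, hIw]
    rw [hfun]
    have hd := (dWx y t).add (((he y).mul (hJ t y)).const_mul (c₀ + q))
    have hval : bsPdx (Function.uncurry w) (y, t) + (c₀ + q) * (Real.exp (q * y) * q
          * (∫ h in (0:ℝ)..y, Real.exp (-(q * h)) * w h t)
          + Real.exp (q * y) * (Real.exp (-(q * y)) * w y t))
        = bsPdx (Function.uncurry w) (y, t) + (c₀ + q) * (w y t
          + q * (Real.exp (q * y) * ∫ h in (0:ℝ)..y, Real.exp (-(q * h)) * w h t)) := by
      rw [hcancel]
      ring
    exact hval ▸ hd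
  have hDfun : ∀ t : ℝ, deriv (fun y => εbar y t) = fun y =>
      bsPdx (Function.uncurry w) (y, t) + (c₀ + q) * (w y t
        + q * (Real.exp (q * y) * ∫ h in (0:ℝ)..y, Real.exp (-(q * h)) * w h t)) :=
    fun t => funext fun y => (dE1x t y).deriv
  constructor
  · intro x hx t ht
    have ce : ∀ g : ℝ × ℝ → ℝ, Continuous g →
        Continuous (Function.uncurry (fun h s => Real.exp (q * (x - h)) * g (h, s))) :=
      fun g hg => (Real.continuous_exp.comp
        (continuous_const.mul (continuous_const.sub continuous_fst))).mul
        (hg.comp (continuous_fst.prodMk continuous_snd))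
    -- time derivatives
    have dE1 : ∀ s : ℝ, HasDerivAt (εbar x)
        (bsPdt (Function.uncurry w) (x, s) + (c₀ + q) * ∫ h in (0:ℝ)..x,
          Real.exp (q * (x - h)) * bsPdt (Function.uncurry w) (h, s)) s := by
      intro s
      have heq : εbar x = fun s => w x s
          + (c₀ + q) * ∫ h in (0:ℝ)..x, Real.exp (q * (x - h)) * w h s :=
        funext fun s => hεbar x s
      rw [heq]
      exact (dWt x s).add ((bs_param_deriv (ce _ contW) (ce _ contB)
        (fun h s => (dWt h s).const_mul _) 0 x s).const_mul _)
    have hεtt : deriv (deriv (εbar x)) t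
        = bsPdt (bsPdt (Function.uncurry w)) (x, t) + (c₀ + q) * ∫ h in (0:ℝ)..x,
            Real.exp (q * (x - h)) * bsPdt (bsPdt (Function.uncurry w)) (h, t) := by
      have h1 : deriv (εbar x) = fun s => bsPdt (Function.uncurry w) (x, s)
          + (c₀ + q) * ∫ h in (0:ℝ)..x, Real.exp (q * (x - h)) * bsPdt (Function.uncurry w) (h, s) :=
        funext fun s => (dE1 s).deriv
      rw [h1]
      exact ((dBt x t).add ((bs_param_deriv (ce _ contB) (ce _ contB2)
        (fun h s => (dBt h s).const_mul _) 0 x t).const_mul _)).deriv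
    -- second spatial derivative
    have hεxx : deriv (deriv (fun y => εbar y t)) x
        = bsPdx (bsPdx (Function.uncurry w)) (x, t) + (c₀ + q) * (bsPdx (Function.uncurry w) (x, t)
          + q * (w x t + q * (Real.exp (q * x) * ∫ h in (0:ℝ)..x, Real.exp (-(q * h)) * w h t))) := by
      rw [hDfun t]
      have hd := (dAx x t).add (((dWx x t).add
        (((he x).mul (hJ t x)).const_mul q)).const_mul (c₀ + q))
      have hval : bsPdx (bsPdx (Function.uncurry w)) (x, t) + (c₀ + q)
            * (bsPdx (Function.uncurry w) (x, t) + q * (Real.exp (q * x) * q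
              * (∫ h in (0:ℝ)..x, Real.exp (-(q * h)) * w h t)
              + Real.exp (q * x) * (Real.exp (-(q * x)) * w x t)))
          = bsPdx (bsPdx (Function.uncurry w)) (x, t) + (c₀ + q)
            * (bsPdx (Function.uncurry w) (x, t) + q * (w x t + q * (Real.exp (q * x)
              * ∫ h in (0:ℝ)..x, Real.exp (-(q * h)) * w h t))) := by
        rw [hcancel]
        ring
      exact (hval ▸ hd).deriv
    -- replace w_tt by w_xx inside the integral
    have congrI : (∫ h in (0:ℝ)..x, Real.exp (q * (x - h)) * bsPdt (bsPdt (Function.uncurry w)) (h, t))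
        = ∫ h in (0:ℝ)..x, Real.exp (q * (x - h)) * bsPdx (bsPdx (Function.uncurry w)) (h, t) := by
      refine intervalIntegral.integral_congr_ae (Filter.Eventually.of_forall fun h hh => ?_)
      have hh' : h ∈ Ioc (0:ℝ) x := by rwa [uIoc_of_le hx.1.le] at hh
      have hmem : h ∈ Ioo (0:ℝ) 1 := ⟨hh'.1, lt_of_le_of_lt hh'.2 hx.2⟩
      rw [hwave'' h hmem t ht]
    -- integration by parts (twice)
    have ibp1 : (∫ h in (0:ℝ)..x, Real.exp (q * (x - h)) * bsPdx (bsPdx (Function.uncurry w)) (h, t))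
        = bsPdx (Function.uncurry w) (x, t) - Real.exp (q * x) * bsPdx (Function.uncurry w) (0, t)
          + q * ∫ h in (0:ℝ)..x, Real.exp (q * (x - h)) * bsPdx (Function.uncurry w) (h, t) :=
      bs_ibp q x (fun h => dAx h t) (contA1.comp (continuous_id.prodMk continuous_const))
    have ibp2 : (∫ h in (0:ℝ)..x, Real.exp (q * (x - h)) * bsPdx (Function.uncurry w) (h, t))
        = w x t - Real.exp (q * x) * w 0 t
          + q * ∫ h in (0:ℝ)..x, Real.exp (q * (x - h)) * w h t :=
      bs_ibp q x (fun h => dWx h t) (contA.comp (continuous_id.prodMk continuous_const))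
    have hA0t : bsPdx (Function.uncurry w) (0, t) = -q * w 0 t :=
      ((dWx 0 t).deriv).symm.trans (hbc t (mem_Ici.2 (le_of_lt ht)))
    rw [hεtt, hεxx, congrI, ibp1, ibp2, hA0t, hIw t x, hwave'' x hx t ht]
    ring
  · intro t ht
    have h0 : deriv (fun y => εbar y t) 0 = bsPdx (Function.uncurry w) (0, t)
        + (c₀ + q) * (w 0 t + q * (Real.exp (q * 0)
          * ∫ h in (0:ℝ)..(0:ℝ), Real.exp (-(q * h)) * w h t)) := (dE1x t 0).deriv
    have hA0t : bsPdx (Function.uncurry w) (0, t) = -q * w 0 t :=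
      ((dWx 0 t).deriv).symm.trans (hbc t ht)
    rw [h0, hεbar 0 t, hA0t]
    simp only [intervalIntegral.integral_same, mul_zero, add_zero]
    ring
end

section
/- Let q, c₀, c₁ be real numbers with c₀ + q ≠ 0, and w : [0,1] × [0,∞) → ℝ twice continuously differentiable with w_tt = w_xx on (0,1) × (0,∞). Suppose that for all t ≥ 0, w(1,t) = −(1/(c₀+q))·[w_x(1,t) + c₁·w_t(1,t)] − ∫₀¹ e^{q(1−h)}[q·w(h,t) + c₁·w_t(h,t)] dh. Define ε̄(x,t) = w(x,t) + (c₀+q)∫₀ˣ e^{q(x−h)} w(h,t) dh. Then ε̄_x(1,t) = −c₁·ε̄_t(1,t) for all t ≥ 0. -/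
/- STATEMENT 4: under the backstepping feedback controller
w(1,t) = −(1/(c₀+q))[w_x(1,t) + c₁ w_t(1,t)] − ∫₀¹ e^{q(1−h)}[q w(h,t) + c₁ w_t(h,t)] dh,
the transformed variable ε̄(x,t) = w(x,t) + (c₀+q)∫₀ˣ e^{q(x−h)} w(h,t) dh satisfies
the damping boundary condition ε̄_x(1,t) = −c₁ ε̄_t(1,t) for t ≥ 0. -/

open Set

theorem backstepping_controller_boundary (q c₀ c₁ : ℝ) (hc : c₀ + q ≠ 0)
    (w : ℝ → ℝ → ℝ)
    (hw : ContDiff ℝ 2 (Function.uncurry w))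
    (hwave : ∀ x ∈ Ioo (0:ℝ) 1, ∀ t ∈ Ioi (0:ℝ),
      deriv (deriv (w x)) t = deriv (deriv (fun y => w y t)) x)
    (hctrl : ∀ t ∈ Ici (0:ℝ),
      w 1 t = -(1 / (c₀ + q)) * (deriv (fun y => w y t) 1 + c₁ * deriv (w 1) t)
        - ∫ h in (0:ℝ)..1, Real.exp (q * (1 - h)) * (q * w h t + c₁ * deriv (w h) t))
    (εbar : ℝ → ℝ → ℝ)
    (hεbar : ∀ x t : ℝ,
      εbar x t = w x t + (c₀ + q) * ∫ h in (0:ℝ)..x, Real.exp (q * (x - h)) * w h t) :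
    ∀ t ∈ Ici (0:ℝ), deriv (fun y => εbar y t) 1 = -c₁ * deriv (εbar 1) t := by
  intro t ht
  set W := Function.uncurry w with hW
  have hdiff : Differentiable ℝ W := hw.differentiable (by norm_num)
  have cW : Continuous W := hw.continuous
  -- partial derivatives
  set wt : ℝ → ℝ → ℝ := fun x s => fderiv ℝ W (x, s) (0, 1) with hwt
  set wx : ℝ → ℝ → ℝ := fun x s => fderiv ℝ W (x, s) (1, 0) with hwx
  have L1 : ∀ x s : ℝ, HasDerivAt (w x) (wt x s) s := by
    intro x s
    have h1 : HasFDerivAt W (fderiv ℝ W (x, s)) (x, s) := (hdiff _).hasFDerivAt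
    have h2 : HasDerivAt (fun s : ℝ => ((x : ℝ), s)) (((0 : ℝ), (1 : ℝ))) s :=
      HasDerivAt.prodMk (hasDerivAt_const s x) (hasDerivAt_id s)
    have := h1.comp_hasDerivAt s h2
    exact this
  have L2 : ∀ x s : ℝ, HasDerivAt (fun y => w y s) (wx x s) x := by
    intro x s
    have h1 : HasFDerivAt W (fderiv ℝ W (x, s)) (x, s) := (hdiff _).hasFDerivAt
    have h2 : HasDerivAt (fun y : ℝ => (y, (s : ℝ))) (((1 : ℝ), (0 : ℝ))) x :=
      HasDerivAt.prodMk (hasDerivAt_id x) (hasDerivAt_const x s)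
    have := h1.comp_hasDerivAt x h2
    exact this
  -- continuity facts
  have cfd : Continuous (fun p : ℝ × ℝ => fderiv ℝ W p) :=
    hw.continuous_fderiv (by norm_num)
  have cwt : Continuous (fun p : ℝ × ℝ => wt p.1 p.2) := by
    have : Continuous (fun p : ℝ × ℝ => fderiv ℝ W (p.1, p.2) ((0 : ℝ), (1 : ℝ))) :=
      (cfd.comp (continuous_fst.prodMk continuous_snd)).clm_apply continuous_const
    simpa [hwt] using this
  have cw2 : Continuous (fun p : ℝ × ℝ => w p.1 p.2) := by
    simpa [hW, Function.uncurry_def] using cW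
  have cwh : ∀ s : ℝ, Continuous (fun h : ℝ => w h s) := fun s =>
    cw2.comp (continuous_id.prodMk continuous_const)
  have cwth : ∀ s : ℝ, Continuous (fun h : ℝ => wt h s) := fun s =>
    cwt.comp (continuous_id.prodMk continuous_const)
  have cexp1 : Continuous (fun h : ℝ => Real.exp (q * (1 - h))) :=
    Real.continuous_exp.comp (by continuity)
  have cexp2 : Continuous (fun h : ℝ => Real.exp (-q * h)) :=
    Real.continuous_exp.comp (by continuity)
  -- rewrite the kernel integral
  have key : ∀ s y : ℝ, (∫ h in (0:ℝ)..y, Real.exp (q * (y - h)) * w h s)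
      = Real.exp (q * y) * ∫ h in (0:ℝ)..y, Real.exp (-q * h) * w h s := by
    intro s y
    have : ∀ h : ℝ, Real.exp (q * (y - h)) * w h s
        = Real.exp (q * y) * (Real.exp (-q * h) * w h s) := by
      intro h
      rw [← mul_assoc, ← Real.exp_add]
      ring_nf
    simp_rw [this]
    rw [intervalIntegral.integral_const_mul]
  -- the x-derivative of εbar at (1,t)
  set g : ℝ → ℝ := fun y => ∫ h in (0:ℝ)..y, Real.exp (-q * h) * w h t with hg
  have hgint : Continuous (fun h : ℝ => Real.exp (-q * h) * w h t) := cexp2.mul (cwh t)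
  have hgd : HasDerivAt g (Real.exp (-q * 1) * w 1 t) 1 := by
    exact intervalIntegral.integral_hasDerivAt_right (hgint.intervalIntegrable _ _)
      (hgint.stronglyMeasurableAtFilter _ _) hgint.continuousAt
  have hE : HasDerivAt (fun y : ℝ => Real.exp (q * y)) (Real.exp (q * 1) * q) 1 := by
    simpa using ((hasDerivAt_id (1:ℝ)).const_mul q).exp
  have hεfun : (fun y => εbar y t)
      = fun y => w y t + (c₀ + q) * (Real.exp (q * y) * g y) := by
    funext y
    rw [hεbar y t, key t y]
  have hεx : HasDerivAt (fun y => εbar y t)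
      (wx 1 t + (c₀ + q) * (Real.exp (q * 1) * q * g 1 +
        Real.exp (q * 1) * (Real.exp (-q * 1) * w 1 t))) 1 := by
    rw [hεfun]
    exact (L2 1 t).add (((hE.mul hgd)).const_mul (c₀ + q))
  -- the t-derivative of εbar 1 at t
  set Iw : ℝ := ∫ h in (0:ℝ)..1, Real.exp (q * (1 - h)) * w h t with hIw
  set Iwt : ℝ := ∫ h in (0:ℝ)..1, Real.exp (q * (1 - h)) * wt h t with hIwt
  -- dominated differentiation under the integral sign
  obtain ⟨C, hC⟩ : ∃ C : ℝ, ∀ p ∈ Icc (0:ℝ) 1 ×ˢ Icc (t - 1) (t + 1),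
      ‖Real.exp (q * (1 - (p : ℝ × ℝ).1)) * wt p.1 p.2‖ ≤ C := by
    have hK : IsCompact (Icc (0:ℝ) 1 ×ˢ Icc (t - 1) (t + 1)) :=
      isCompact_Icc.prod isCompact_Icc
    have hcont : ContinuousOn (fun p : ℝ × ℝ => Real.exp (q * (1 - p.1)) * wt p.1 p.2)
        (Icc (0:ℝ) 1 ×ˢ Icc (t - 1) (t + 1)) :=
      ((cexp1.comp continuous_fst).mul cwt).continuousOn
    exact hK.exists_bound_of_continuousOn hcont
  have hdint : HasDerivAt (fun s => ∫ h in (0:ℝ)..1, Real.exp (q * (1 - h)) * w h s) Iwt t := by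
    have := intervalIntegral.hasDerivAt_integral_of_dominated_loc_of_deriv_le
      (F := fun s h => Real.exp (q * (1 - h)) * w h s)
      (F' := fun s h => Real.exp (q * (1 - h)) * wt h s)
      (x₀ := t) (bound := fun _ => C) (a := 0) (b := 1) (μ := MeasureTheory.volume)
      (Metric.ball_mem_nhds t one_pos)
      (Filter.Eventually.of_forall fun s => ((cexp1.mul (cwh s)).aestronglyMeasurable))
      ((cexp1.mul (cwh t)).intervalIntegrable _ _)
      ((cexp1.mul (cwth t)).aestronglyMeasurable)
      ?_ (intervalIntegrable_const) ?_
    · exact this.2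
    · refine Filter.Eventually.of_forall fun h hh s hs => ?_
      have hh' : h ∈ Icc (0:ℝ) 1 := by
        rw [Set.uIoc_of_le (by norm_num : (0:ℝ) ≤ 1)] at hh
        exact ⟨le_of_lt hh.1, hh.2⟩
      have hs' : s ∈ Icc (t - 1) (t + 1) := by
        have := Metric.mem_ball.mp hs
        rw [Real.dist_eq] at this
        constructor <;> [linarith [abs_lt.mp this]; linarith [(abs_lt.mp this).2]]
      exact hC (h, s) ⟨hh', hs'⟩
    · exact Filter.Eventually.of_forall fun h _ s _ => (L1 h s).const_mul _
  have hεt : HasDerivAt (εbar 1) (wt 1 t + (c₀ + q) * Iwt) t := by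
    have hfun : εbar 1 = fun s => w 1 s +
        (c₀ + q) * ∫ h in (0:ℝ)..1, Real.exp (q * (1 - h)) * w h s := by
      funext s; exact hεbar 1 s
    rw [hfun]
    exact (L1 1 t).add (hdint.const_mul (c₀ + q))
  -- rewrite the control law
  have hctrl' := hctrl t ht
  rw [(L2 1 t).deriv] at hctrl'
  have hder1 : ∀ h : ℝ, deriv (w h) t = wt h t := fun h => (L1 h t).deriv
  simp_rw [hder1] at hctrl'
  have hsplit : (∫ h in (0:ℝ)..1, Real.exp (q * (1 - h)) * (q * w h t + c₁ * wt h t))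
      = q * Iw + c₁ * Iwt := by
    have e1 : ∀ h : ℝ, Real.exp (q * (1 - h)) * (q * w h t + c₁ * wt h t)
        = q * (Real.exp (q * (1 - h)) * w h t) + c₁ * (Real.exp (q * (1 - h)) * wt h t) := by
      intro h; ring
    simp_rw [e1]
    rw [intervalIntegral.integral_add (f := fun h => q * (Real.exp (q * (1 - h)) * w h t))
        (g := fun h => c₁ * (Real.exp (q * (1 - h)) * wt h t))
        ((continuous_const.mul (cexp1.mul (cwh t))).intervalIntegrable _ _)
        ((continuous_const.mul (cexp1.mul (cwth t))).intervalIntegrable _ _),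
      intervalIntegral.integral_const_mul, intervalIntegral.integral_const_mul]
  have hctrl'' : w 1 t = -(1 / (c₀ + q)) * (wx 1 t + c₁ * wt 1 t) - (q * Iw + c₁ * Iwt) := by
    rw [hctrl', hsplit]
  -- relate g 1 to Iw
  have hgIw : Real.exp (q * 1) * g 1 = Iw := by
    rw [hg, hIw, key t 1]
  -- finish
  rw [hεx.deriv, hεt.deriv]
  have hexp : Real.exp (q * 1) * (Real.exp (-q * 1) * w 1 t) = w 1 t := by
    rw [← mul_assoc, ← Real.exp_add]
    norm_num
  have hqg : Real.exp (q * 1) * q * g 1 = q * Iw := by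
    rw [← hgIw]; ring
  rw [hexp, hqg, hctrl'']
  field_simp
  ring
end

section
/- Let ω > 0 and 0 < c₂ < 1, set S_η = [[0, ω],[−ω, 0]] and γ_η = [1, 0], and let g₁ : [0,1] → ℝ^{1×2} (twice continuously differentiable) and g₂ : [0,1] → ℝ^{1×2} (continuously differentiable) satisfy g₁''(x) = g₁(x)·S_η², g₁'(0) = 0, g₁(1) = −γ_η − g₂(1), g₂'(x) = −g₂(x)·S_η, g₂(0) = −c₂·g₁(0). Then the pair (S_η, g₁(0)) is observable; equivalently, the 2×2 matrix whose first row is g₁(0) and whose second row is g₁(0)·S_η is invertible. -/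
/- STATEMENT 10: if g₁ (C²), g₂ (C¹) solve the observer kernel equations on [0,1]
with S_η = [[0, ω],[−ω, 0]], γ_η = [1, 0], ω > 0, 0 < c₂ < 1, then the pair
(S_η, g₁(0)) is observable, i.e. the Kalman observability matrix with rows g₁(0)
and g₁(0)·S_η is invertible. -/

attribute [local instance] Matrix.normedAddCommGroup Matrix.normedSpace

open Set Matrix

theorem observer_kernel_pair_observable (ω c₂ : ℝ)
    (hω : 0 < ω) (hc₂ : c₂ ∈ Ioo (0:ℝ) 1)
    (g₁ g₂ : ℝ → Matrix (Fin 1) (Fin 2) ℝ)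
    (hg₁smooth : ContDiffOn ℝ 2 g₁ (Icc 0 1))
    (hg₂smooth : ContDiffOn ℝ 1 g₂ (Icc 0 1))
    (hg₁ode : ∀ x ∈ Icc (0:ℝ) 1,
      derivWithin (derivWithin g₁ (Icc 0 1)) (Icc 0 1) x = g₁ x * (!![0, ω; -ω, 0]) ^ 2)
    (hg₁bc0 : derivWithin g₁ (Icc 0 1) 0 = 0)
    (hg₁bc1 : g₁ 1 = -(!![1, 0] : Matrix (Fin 1) (Fin 2) ℝ) - g₂ 1)
    (hg₂ode : ∀ x ∈ Icc (0:ℝ) 1,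
      derivWithin g₂ (Icc 0 1) x = -(g₂ x * (!![0, ω; -ω, 0])))
    (hg₂bc : g₂ 0 = (-c₂) • g₁ 0) :
    IsUnit (Matrix.of ![(g₁ 0) 0, (g₁ 0 * (!![0, ω; -ω, 0])) 0] :
      Matrix (Fin 2) (Fin 2) ℝ) := by
  have hmem : ∀ t ∈ Ico (0:ℝ) 1, Icc (0:ℝ) 1 ∈ nhdsWithin t (Ici t) := by
    intro t ht
    refine Filter.mem_of_superset (Filter.inter_mem self_mem_nhdsWithin
      (mem_nhdsWithin_of_mem_nhds (Iio_mem_nhds ht.2))) ?_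
    rintro x ⟨hx1, hx2⟩
    exact ⟨le_trans ht.1 hx1, le_of_lt hx2⟩
  -- key claim: g₁ 0 ≠ 0
  have hg1ne : g₁ 0 ≠ 0 := by
    intro h0
    -- g₂ vanishes identically
    have hg20 : g₂ 0 = 0 := by rw [hg₂bc, h0, smul_zero]
    let L₂lin : Matrix (Fin 1) (Fin 2) ℝ →ₗ[ℝ] Matrix (Fin 1) (Fin 2) ℝ :=
      { toFun := fun m => -(m * !![0, ω; -ω, 0])
        map_add' := by intro a b; simp [Matrix.add_mul, add_comm]
        map_smul' := by intro c a; simp [Matrix.smul_mul] }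
    let L₂ := LinearMap.toContinuousLinearMap L₂lin
    have hg₂d : ∀ t ∈ Ico (0:ℝ) 1, HasDerivWithinAt g₂ (L₂ (g₂ t)) (Ici t) t := by
      intro t ht
      have h1 : HasDerivWithinAt g₂ (derivWithin g₂ (Icc 0 1) t) (Icc 0 1) t :=
        (hg₂smooth.differentiableOn (by norm_num) t (Ico_subset_Icc_self ht)).hasDerivWithinAt
      rw [hg₂ode t (Ico_subset_Icc_self ht)] at h1
      exact h1.mono_of_mem_nhdsWithin (hmem t ht)
    have hz₂ : EqOn g₂ (fun _ => (0 : Matrix (Fin 1) (Fin 2) ℝ)) (Icc 0 1) := by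
      refine ODE_solution_unique (v := fun _ x => L₂ x) (fun _ => L₂.lipschitz)
        hg₂smooth.continuousOn hg₂d continuousOn_const ?_ (by simpa using hg20)
      intro t ht
      simpa using (hasDerivWithinAt_const t (Ici t) (0 : Matrix (Fin 1) (Fin 2) ℝ))
    have hg21 : g₂ 1 = 0 := hz₂ (by norm_num)
    -- g₁ together with its derivative vanishes identically
    have hS2 : ∀ m : Matrix (Fin 1) (Fin 2) ℝ,
        m * (!![0, ω; -ω, 0]) ^ 2 = (-(ω ^ 2)) • m := by
      intro m
      have h2 : (!![0, ω; -ω, 0] : Matrix (Fin 2) (Fin 2) ℝ) ^ 2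
          = (-(ω ^ 2)) • (1 : Matrix (Fin 2) (Fin 2) ℝ) := by
        rw [pow_two]
        ext i j
        fin_cases i <;> fin_cases j <;>
          simp [Matrix.mul_apply, Fin.sum_univ_two, Matrix.one_apply] <;> ring
      rw [h2, Matrix.mul_smul, Matrix.mul_one]
    set dg₁ := derivWithin g₁ (Icc (0:ℝ) 1) with hdg₁
    have hdg₁smooth : ContDiffOn ℝ 1 dg₁ (Icc 0 1) :=
      hg₁smooth.derivWithin (uniqueDiffOn_Icc one_pos) (by norm_num)
    let L₁ : (Matrix (Fin 1) (Fin 2) ℝ × Matrix (Fin 1) (Fin 2) ℝ) →L[ℝ]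
        (Matrix (Fin 1) (Fin 2) ℝ × Matrix (Fin 1) (Fin 2) ℝ) :=
      LinearMap.toContinuousLinearMap
      ((LinearMap.snd ℝ (Matrix (Fin 1) (Fin 2) ℝ) (Matrix (Fin 1) (Fin 2) ℝ)).prod
        ((-(ω ^ 2)) • LinearMap.fst ℝ (Matrix (Fin 1) (Fin 2) ℝ) (Matrix (Fin 1) (Fin 2) ℝ)))
    set f : ℝ → Matrix (Fin 1) (Fin 2) ℝ × Matrix (Fin 1) (Fin 2) ℝ :=
      fun t => (g₁ t, dg₁ t) with hf
    have hfd : ∀ t ∈ Ico (0:ℝ) 1, HasDerivWithinAt f (L₁ (f t)) (Ici t) t := by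
      intro t ht
      have h1 : HasDerivWithinAt g₁ (dg₁ t) (Icc 0 1) t :=
        (hg₁smooth.differentiableOn (by norm_num) t (Ico_subset_Icc_self ht)).hasDerivWithinAt
      have h2 : HasDerivWithinAt dg₁ (derivWithin dg₁ (Icc 0 1) t) (Icc 0 1) t :=
        (hdg₁smooth.differentiableOn (by norm_num) t (Ico_subset_Icc_self ht)).hasDerivWithinAt
      rw [hdg₁, hg₁ode t (Ico_subset_Icc_self ht), hS2] at h2
      exact ((h1.prodMk h2).mono_of_mem_nhdsWithin (hmem t ht))
    have hz₁ : EqOn f (fun _ => (0 : Matrix (Fin 1) (Fin 2) ℝ × Matrix (Fin 1) (Fin 2) ℝ))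
        (Icc 0 1) := by
      refine ODE_solution_unique (v := fun _ x => L₁ x) (fun _ => L₁.lipschitz)
        (hg₁smooth.continuousOn.prodMk hdg₁smooth.continuousOn) hfd continuousOn_const ?_ ?_
      · intro t ht
        simpa using (hasDerivWithinAt_const t (Ici t)
          (0 : Matrix (Fin 1) (Fin 2) ℝ × Matrix (Fin 1) (Fin 2) ℝ))
      · simp [hf, h0, ← hdg₁, hg₁bc0, Prod.ext_iff]
    have hg11 : g₁ 1 = 0 := by
      have := hz₁ (show (1:ℝ) ∈ Icc (0:ℝ) 1 by norm_num)
      exact congrArg Prod.fst this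
    rw [hg11, hg21, sub_zero] at hg₁bc1
    have := congrFun (congrFun hg₁bc1 0) 0
    simp at this
  -- now the determinant computation
  rw [Matrix.isUnit_iff_isUnit_det, isUnit_iff_ne_zero]
  have hdet : (Matrix.of ![(g₁ 0) 0, (g₁ 0 * (!![0, ω; -ω, 0])) 0] :
      Matrix (Fin 2) (Fin 2) ℝ).det = ω * ((g₁ 0 0 0) ^ 2 + (g₁ 0 0 1) ^ 2) := by
    simp [Matrix.det_fin_two, Matrix.mul_apply, Fin.sum_univ_two]
    ring
  have hab : g₁ 0 0 0 ≠ 0 ∨ g₁ 0 0 1 ≠ 0 := by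
    by_contra h
    push_neg at h
    apply hg1ne
    ext i j
    fin_cases i <;> fin_cases j <;> simp [h.1, h.2]
  have hpos : 0 < (g₁ 0 0 0) ^ 2 + (g₁ 0 0 1) ^ 2 := by
    rcases hab with h | h
    · have := lt_of_le_of_ne (sq_nonneg (g₁ 0 0 0)) (Ne.symm (pow_ne_zero 2 h))
      nlinarith [sq_nonneg (g₁ 0 0 1)]
    · have := lt_of_le_of_ne (sq_nonneg (g₁ 0 0 1)) (Ne.symm (pow_ne_zero 2 h))
      nlinarith [sq_nonneg (g₁ 0 0 0)]
  rw [hdet]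
  exact (mul_pos hω hpos).ne'
end

section
/- Let θ > 0, τ > 0, c₂ ∈ ℝ, S_c(ϑ) = [[0, 1],[−ϑ, 0]], and for each ϑ > 0 let f₁(·,ϑ), f₂(·,ϑ) : [0,1] → ℝ^{1×2} be the unique solutions of f₁''(x,ϑ) = f₁(x,ϑ)·S_c(ϑ)², f₁'(0,ϑ) = 0, f₁(0,ϑ) = [1,0], f₂'(x,ϑ) = −f₂(x,ϑ)·S_c(ϑ), f₂(0,ϑ) = −c₂·[1,0] (derivatives in x). Let d : ℝ → ℝ² solve d'(s) = S_c(θ)·d(s), and suppose θ̂ : [0,∞) → (0,∞) and d̂ : [0,∞) → ℝ² satisfy |θ̂(r) − θ| ≤ M·e^{−μr} and ‖d̂(r) − d(r)‖ ≤ M·e^{−μr} for some M, μ > 0. For t > τ and s ∈ [t−τ, t] define Δᵗ(s) = (f₁(1,θ) + f₂(1,θ))·exp(S_c(θ)(s−t+τ))·d(t−τ) − (f₁(1,θ̂(t−τ)) + f₂(1,θ̂(t−τ)))·exp(S_c(θ̂(t−τ))(s−t+τ))·d̂(t−τ). Then there exist M', μ' > 0 such that sup_{s ∈ [t−τ, t]}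 |Δᵗ(s)| ≤ M'·e^{−μ' t} for all t > τ. -/
/- STATEMENT 17: exponential decay of the predictor mismatch
Δᵗ(s) = (f₁(1,θ)+f₂(1,θ)) exp(S_c(θ)(s−t+τ)) d(t−τ)
      − (f₁(1,θ̂(t−τ))+f₂(1,θ̂(t−τ))) exp(S_c(θ̂(t−τ))(s−t+τ)) d̂(t−τ),
uniformly over s ∈ [t−τ, t]: sup_{s∈[t−τ,t]} |Δᵗ(s)| ≤ M' e^{−μ' t}. Here f₁(·,ϑ),
f₂(·,ϑ) are the unique solutions of the canonical kernel equations for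
S_c(ϑ) = [[0,1],[−ϑ,0]], d solves d' = S_c(θ) d, and θ̂, d̂ converge exponentially. -/

noncomputable section PredictorAux

open Set Matrix

abbrev M12 := Matrix (Fin 1) (Fin 2) ℝ
abbrev M22 := Matrix (Fin 2) (Fin 2) ℝ

def Sc (ϑ : ℝ) : M22 := !![0, 1; -ϑ, 0]
def E1 : M12 := !![1, 0]
def E2 : M12 := !![0, 1]

lemma E1_mul_Sc (ϑ : ℝ) : E1 * Sc ϑ = E2 := by
  ext i j; fin_cases i <;> fin_cases j <;>
    simp [E1, E2, Sc, Matrix.mul_apply, Fin.sum_univ_two]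

lemma E2_mul_Sc (ϑ : ℝ) : E2 * Sc ϑ = (-ϑ) • E1 := by
  ext i j; fin_cases i <;> fin_cases j <;>
    simp [E1, E2, Sc, Matrix.mul_apply, Fin.sum_univ_two]

lemma ODE_linear_unique {E : Type*} [NormedAddCommGroup E] [NormedSpace ℝ E]
    [FiniteDimensional ℝ E] (L : E →ₗ[ℝ] E) {f g : ℝ → E} {b : ℝ}
    (hf : Continuous f) (hg : Continuous g)
    (hf' : ∀ x ∈ Ico (0:ℝ) b, HasDerivAt f (L (f x)) x)
    (hg' : ∀ x ∈ Ico (0:ℝ) b, HasDerivAt g (L (g x)) x)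
    (h0 : f 0 = g 0) (hb : 0 ≤ b) : f b = g b := by
  have := ODE_solution_unique (v := fun _ x => L.toContinuousLinearMap x)
    (fun _ => L.toContinuousLinearMap.lipschitz)
    hf.continuousOn (fun x hx => ((hf' x hx).hasDerivWithinAt))
    hg.continuousOn (fun x hx => ((hg' x hx).hasDerivWithinAt)) h0
  exact this (right_mem_Icc.2 hb)

lemma hasDerivAt_lin (ω x : ℝ) : HasDerivAt (fun y : ℝ => ω * y) ω x := by
  simpa using (hasDerivAt_id x).const_mul ω

section ExpFormula

attribute [local instance] Matrix.linftyOpNormedAddCommGroup Matrix.linftyOpNormedSpace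
  Matrix.linftyOpNormedRing Matrix.linftyOpNormedAlgebra

lemma exp_Sc (ϑ ω r : ℝ) (hω : 0 < ω) (hϑ : ϑ = ω ^ 2) (hr : 0 ≤ r) :
    NormedSpace.exp (r • Sc ϑ) =
      Real.cos (ω * r) • (1 : M22) + (Real.sin (ω * r) / ω) • Sc ϑ := by
  subst hϑ
  have hω0 : ω ≠ 0 := hω.ne'
  refine ODE_linear_unique
    (LinearMap.mulRight ℝ (Sc (ω ^ 2)))
    (f := fun x => NormedSpace.exp (x • Sc (ω ^ 2)))
    (g := fun x => Real.cos (ω * x) • (1 : M22) + (Real.sin (ω * x) / ω) • Sc (ω ^ 2))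
    (Differentiable.continuous fun x =>
      (hasDerivAt_exp_smul_const (𝕂 := ℝ) (Sc (ω ^ 2)) x).differentiableAt)
    (by fun_prop)
    (fun x _ => by
      exact hasDerivAt_exp_smul_const (𝕂 := ℝ) (Sc (ω ^ 2)) x)
    (fun x _ => by
      have hc : HasDerivAt (fun y => Real.cos (ω * y)) (-Real.sin (ω * x) * ω) x :=
        (hasDerivAt_lin ω x).cos
      have hs : HasDerivAt (fun y => Real.sin (ω * y) / ω) (Real.cos (ω * x) * ω / ω) x :=
        (hasDerivAt_lin ω x).sin.div_const ω
      have h := (hc.smul_const (1 : M22)).add (hs.smul_const (Sc (ω ^ 2)))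
      convert h using 1
      show (Real.cos (ω * x) • (1:M22) + (Real.sin (ω * x) / ω) • Sc (ω^2))
          * Sc (ω ^ 2) = _
      rw [add_mul, smul_mul_assoc, smul_mul_assoc, one_mul, ← pow_two,
        show (Sc (ω ^ 2)) ^ 2 = (-(ω ^ 2)) • (1 : M22) by
          ext i j; fin_cases i <;> fin_cases j <;>
            simp [Sc, pow_two, Matrix.mul_apply, Fin.sum_univ_two, Matrix.one_apply],
        smul_smul]
      have e1 : Real.sin (ω * x) / ω * -ω ^ 2 = -Real.sin (ω * x) * ω := by
        field_simp
      have e2 : Real.cos (ω * x) * ω / ω = Real.cos (ω * x) := by field_simp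
      rw [e1, e2]
      abel
      rfl)
    (by simp) hr

end ExpFormula

attribute [local instance] Matrix.normedAddCommGroup Matrix.normedSpace

/-- right multiplication as a linear map on 1×2 matrices -/
def mulR (C : M22) : M12 →ₗ[ℝ] M12 where
  toFun X := X * C
  map_add' X Y := Matrix.add_mul X Y C
  map_smul' c X := Matrix.smul_mul c X C

/-- the pair map (p,q) ↦ (q, -ϑ•p) -/
def pairL (ϑ : ℝ) : (M12 × M12) →ₗ[ℝ] (M12 × M12) :=
  (LinearMap.snd ℝ M12 M12).prod ((-ϑ) • LinearMap.fst ℝ M12 M12)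

lemma f2_eval (ϑ ω c₂ : ℝ) (hω : 0 < ω) (hϑ : ϑ = ω ^ 2) (f : ℝ → M12)
    (hc : ContDiff ℝ 1 f)
    (heq : ∀ x ∈ Icc (0:ℝ) 1, deriv f x = -(f x * Sc ϑ))
    (h0 : f 0 = (-c₂) • E1) :
    f 1 = (-c₂ * Real.cos ω) • E1 + (c₂ * (Real.sin ω / ω)) • E2 := by
  subst hϑ
  have hω0 : ω ≠ 0 := hω.ne'
  have hdiff : Differentiable ℝ f := hc.differentiable one_ne_zero
  have main := ODE_linear_unique (mulR (-(Sc (ω ^ 2)))) (f := f)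
    (g := fun x => (-c₂ * Real.cos (ω * x)) • E1 + (c₂ * (Real.sin (ω * x) / ω)) • E2)
    hdiff.continuous (by fun_prop)
    (fun x hx => by
      have h := (hdiff x).hasDerivAt.congr_deriv (heq x (Ico_subset_Icc_self hx))
      simpa [mulR, Matrix.mul_neg] using h)
    (fun x _ => by
      have hc1 : HasDerivAt (fun y => -c₂ * Real.cos (ω * y)) (-c₂ * (-Real.sin (ω * x) * ω)) x :=
        ((hasDerivAt_lin ω x).cos).const_mul (-c₂)
      have hs1 : HasDerivAt (fun y => c₂ * (Real.sin (ω * y) / ω))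
          (c₂ * (Real.cos (ω * x) * ω / ω)) x :=
        ((hasDerivAt_lin ω x).sin.div_const ω).const_mul c₂
      have h := (hc1.smul_const E1).add (hs1.smul_const E2)
      convert h using 1
      show mulR _ _ = _
      simp only [mulR, LinearMap.coe_mk, AddHom.coe_mk]
      rw [Matrix.mul_neg, Matrix.add_mul, Matrix.smul_mul, Matrix.smul_mul,
        E1_mul_Sc, E2_mul_Sc, smul_smul, neg_add]
      rw [← neg_smul, ← neg_smul]
      have e1 : -(c₂ * (Real.sin (ω * x) / ω) * -ω ^ 2) = -c₂ * (-Real.sin (ω * x) * ω) := by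
        field_simp
      have e2 : -(-c₂ * Real.cos (ω * x)) = c₂ * (Real.cos (ω * x) * ω / ω) := by
        field_simp
      rw [e1, e2]
      abel
      rfl)
    (by simpa using h0) zero_le_one
  simpa using main

lemma f1_eval (ϑ ω : ℝ) (hω : 0 < ω) (hϑ : ϑ = ω ^ 2) (f : ℝ → M12)
    (hc : ContDiff ℝ 2 f)
    (heq : ∀ x ∈ Icc (0:ℝ) 1, deriv (deriv f) x = f x * (Sc ϑ) ^ 2)
    (hd0 : deriv f 0 = 0) (h0 : f 0 = E1) :
    f 1 = Real.cos ω • E1 := by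
  subst hϑ
  have hω0 : ω ≠ 0 := hω.ne'
  have hdiff : Differentiable ℝ f := hc.differentiable two_ne_zero
  have hc' : ContDiff ℝ 1 (deriv f) := by
    exact (contDiff_succ_iff_deriv.mp (by exact_mod_cast hc : ContDiff ℝ (1 + 1) f)).2.2
  have hdiff' : Differentiable ℝ (deriv f) := hc'.differentiable one_ne_zero
  have hSc2 : ∀ X : M12, X * (Sc (ω ^ 2)) ^ 2 = (-(ω ^ 2)) • X := by
    intro X
    rw [show (Sc (ω ^ 2)) ^ 2 = (-(ω ^ 2)) • (1 : M22) by
      ext i j; fin_cases i <;> fin_cases j <;>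
        simp [Sc, pow_two, Matrix.mul_apply, Fin.sum_univ_two, Matrix.one_apply]]
    rw [Matrix.mul_smul, Matrix.mul_one]
  have key : (fun x => (f x, deriv f x)) 1 =
      (fun x => (Real.cos (ω * x) • E1, (-(ω * Real.sin (ω * x))) • E1)) 1 := by
    refine ODE_linear_unique (pairL (ω ^ 2))
      (f := fun x => (f x, deriv f x))
      (g := fun x => (Real.cos (ω * x) • E1, (-(ω * Real.sin (ω * x))) • E1))
      (hdiff.continuous.prodMk hdiff'.continuous)
      (Continuous.prodMk (by fun_prop) (by fun_prop))
      (fun x hx => by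
        have h1 := (hdiff x).hasDerivAt
        have h2 := (hdiff' x).hasDerivAt.congr_deriv ((heq x (Ico_subset_Icc_self hx)).trans (hSc2 _))
        exact (h1.prodMk h2))
      (fun x _ => by
        have hc1 : HasDerivAt (fun y => Real.cos (ω * y)) (-Real.sin (ω * x) * ω) x :=
          (hasDerivAt_lin ω x).cos
        have hs1 : HasDerivAt (fun y => -(ω * Real.sin (ω * y)))
            (-(ω * (Real.cos (ω * x) * ω))) x :=
          (((hasDerivAt_lin ω x).sin).const_mul ω).neg
        have h := (hc1.smul_const E1).prodMk (hs1.smul_const E1)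
        refine h.congr_deriv (Eq.symm ?_)
        simp only [pairL, LinearMap.prod_apply, LinearMap.snd_apply, LinearMap.fst_apply,
          Pi.prod, LinearMap.smul_apply]
        refine Prod.ext ?_ ?_
        · show (-(ω * Real.sin (ω * x))) • E1 = (-Real.sin (ω * x) * ω) • E1
          ring_nf
        · show (-(ω ^ 2)) • (Real.cos (ω * x) • E1) = (-(ω * (Real.cos (ω * x) * ω))) • E1
          rw [smul_smul]; ring_nf)
      (by simp [h0, hd0]) zero_le_one
  have := congrArg Prod.fst key
  simpa using this

def A1f (c₂ ω r : ℝ) : ℝ :=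
  (1 - c₂) * Real.cos ω * Real.cos (ω * r) - c₂ * Real.sin ω * Real.sin (ω * r)
def A2f (c₂ ω r : ℝ) : ℝ :=
  (1 - c₂) * Real.cos ω * (Real.sin (ω * r) / ω) + c₂ * (Real.sin ω / ω) * Real.cos (ω * r)

lemma G_scalar (c₂ ϑ ω r : ℝ) (hω : 0 < ω) (hϑ : ϑ = ω ^ 2) :
    (Real.cos ω • E1 + ((-c₂ * Real.cos ω) • E1 + (c₂ * (Real.sin ω / ω)) • E2)) *
      (Real.cos (ω * r) • (1 : M22) + (Real.sin (ω * r) / ω) • Sc ϑ) =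
    (A1f c₂ ω r) • E1 + (A2f c₂ ω r) • E2 := by
  subst hϑ
  have hω0 : ω ≠ 0 := hω.ne'
  ext i j
  fin_cases i <;> fin_cases j <;>
    simp [E1, E2, Sc, A1f, A2f, Matrix.mul_apply, Fin.sum_univ_two, Matrix.one_apply] <;>
    (first | (field_simp; ring1) | exact Or.inl (by ring) | exact Or.inl trivial)

lemma mulVec_formula (a b : ℝ) (v : Fin 2 → ℝ) :
    ((a • E1 + b • E2).mulVec v) 0 = a * v 0 + b * v 1 := by
  simp [E1, E2, Matrix.mulVec, dotProduct, Fin.sum_univ_two]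

lemma lip_sin (a b : ℝ) : |Real.sin a - Real.sin b| ≤ |a - b| := by
  rw [Real.sin_sub_sin]
  have h1 : |Real.sin ((a - b) / 2)| ≤ |(a - b) / 2| := Real.abs_sin_le_abs
  have h2 : |Real.cos ((a + b) / 2)| ≤ 1 := Real.abs_cos_le_one _
  calc |2 * Real.sin ((a - b) / 2) * Real.cos ((a + b) / 2)|
      = 2 * |Real.sin ((a - b) / 2)| * |Real.cos ((a + b) / 2)| := by
        rw [abs_mul, abs_mul, abs_two]
    _ ≤ 2 * |(a - b) / 2| * 1 := by
        nlinarith [abs_nonneg (Real.sin ((a - b) / 2)), abs_nonneg (Real.cos ((a + b) / 2)),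
          abs_nonneg ((a - b) / 2)]
    _ = |a - b| := by rw [abs_div, abs_two]; ring

lemma lip_cos (a b : ℝ) : |Real.cos a - Real.cos b| ≤ |a - b| := by
  rw [Real.cos_sub_cos]
  have h1 : |Real.sin ((a + b) / 2)| ≤ 1 := Real.abs_sin_le_one _
  have h2 : |Real.sin ((a - b) / 2)| ≤ |(a - b) / 2| := Real.abs_sin_le_abs
  calc |(-2) * Real.sin ((a + b) / 2) * Real.sin ((a - b) / 2)|
      = 2 * |Real.sin ((a + b) / 2)| * |Real.sin ((a - b) / 2)| := by
        rw [abs_mul, abs_mul, abs_neg, abs_two]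
    _ ≤ 2 * 1 * |(a - b) / 2| := by
        nlinarith [abs_nonneg (Real.sin ((a + b) / 2)), abs_nonneg (Real.sin ((a - b) / 2)),
          abs_nonneg ((a - b) / 2)]
    _ = |a - b| := by rw [abs_div, abs_two]; ring

lemma sinc_le (ω x : ℝ) (hω : 0 < ω) (hx : 0 ≤ x) : |Real.sin (ω * x) / ω| ≤ x := by
  rw [abs_div, abs_of_pos hω, div_le_iff₀ hω]
  calc |Real.sin (ω * x)| ≤ |ω * x| := Real.abs_sin_le_abs
    _ = x * ω := by rw [abs_mul, abs_of_pos hω, abs_of_nonneg hx]; ring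

lemma prod_diff_le (x₁ x₂ y₁ y₂ C δ₁ δ₂ : ℝ) (hC0 : 0 ≤ C)
    (h1 : |x₂| ≤ C) (h2 : |y₁| ≤ C) (d1 : |x₁ - x₂| ≤ δ₁) (d2 : |y₁ - y₂| ≤ δ₂) :
    |x₁ * y₁ - x₂ * y₂| ≤ C * (δ₁ + δ₂) := by
  have e : x₁ * y₁ - x₂ * y₂ = (x₁ - x₂) * y₁ + x₂ * (y₁ - y₂) := by ring
  rw [e]
  calc |(x₁ - x₂) * y₁ + x₂ * (y₁ - y₂)| ≤ |(x₁ - x₂) * y₁| + |x₂ * (y₁ - y₂)| := abs_add_le _ _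
    _ = |x₁ - x₂| * |y₁| + |x₂| * |y₁ - y₂| := by rw [abs_mul, abs_mul]
    _ ≤ C * (δ₁ + δ₂) := by
        nlinarith [abs_nonneg (x₁ - x₂), abs_nonneg (y₁ - y₂), abs_nonneg x₂, abs_nonneg y₁,
          d1.trans' (abs_nonneg _), d2.trans' (abs_nonneg _)]

lemma tri_sub (a b : ℝ) : |a - b| ≤ |a| + |b| := by
  calc |a - b| = |a + (-b)| := by ring_nf
    _ ≤ |a| + |(-b)| := abs_add_le _ _
    _ = |a| + |b| := by rw [abs_neg]

lemma mul3_le (a x y b : ℝ) (hx : |x| ≤ 1) (hy : |y| ≤ b) : |a * x * y| ≤ |a| * b := by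
  rw [abs_mul, abs_mul]
  exact mul_le_mul (mul_le_of_le_one_right (abs_nonneg a) hx) hy (abs_nonneg y) (abs_nonneg a)

lemma abs_mul3_le (a x y : ℝ) (hx : |x| ≤ 1) (hy : |y| ≤ 1) : |a * x * y| ≤ |a| := by
  simpa using mul3_le a x y 1 hx hy

lemma abs_mul_le (a b A B : ℝ) (h1 : |a| ≤ A) (h2 : |b| ≤ B) : |a * b| ≤ A * B := by
  rw [abs_mul]
  exact mul_le_mul h1 h2 (abs_nonneg _) ((abs_nonneg _).trans h1)

lemma A1_bound (c₂ ω r : ℝ) : |A1f c₂ ω r| ≤ |1 - c₂| + |c₂| := by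
  unfold A1f
  calc |(1 - c₂) * Real.cos ω * Real.cos (ω * r) - c₂ * Real.sin ω * Real.sin (ω * r)|
      ≤ |(1 - c₂) * Real.cos ω * Real.cos (ω * r)| + |c₂ * Real.sin ω * Real.sin (ω * r)| :=
        tri_sub _ _
    _ ≤ |1 - c₂| + |c₂| :=
        add_le_add (abs_mul3_le _ _ _ (Real.abs_cos_le_one _) (Real.abs_cos_le_one _))
          (abs_mul3_le _ _ _ (Real.abs_sin_le_one _) (Real.abs_sin_le_one _))

lemma A2_bound (c₂ ω r τ : ℝ) (hω : 0 < ω) (hr : 0 ≤ r) (hrτ : r ≤ τ) :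
    |A2f c₂ ω r| ≤ |1 - c₂| * τ + |c₂| := by
  unfold A2f
  have h1 : |(1 - c₂) * Real.cos ω * (Real.sin (ω * r) / ω)| ≤ |1 - c₂| * τ :=
    mul3_le _ _ _ _ (Real.abs_cos_le_one _) ((sinc_le ω r hω hr).trans hrτ)
  have h2 : |c₂ * (Real.sin ω / ω) * Real.cos (ω * r)| ≤ |c₂| := by
    refine abs_mul3_le _ _ _ ?_ (Real.abs_cos_le_one _)
    have := sinc_le ω 1 hω zero_le_one
    rwa [mul_one] at this
  calc |(1 - c₂) * Real.cos ω * (Real.sin (ω * r) / ω) + c₂ * (Real.sin ω / ω) * Real.cos (ω * r)|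
      ≤ |(1 - c₂) * Real.cos ω * (Real.sin (ω * r) / ω)| +
        |c₂ * (Real.sin ω / ω) * Real.cos (ω * r)| := abs_add_le _ _
    _ ≤ |1 - c₂| * τ + |c₂| := add_le_add h1 h2

lemma sinc_diff (m ω ω' x b : ℝ) (hm : 0 < m) (hω : m ≤ ω) (hω' : m ≤ ω')
    (hx : 0 ≤ x) (hxb : x ≤ b) :
    |Real.sin (ω * x) / ω - Real.sin (ω' * x) / ω'| ≤ (b / m + 1 / m ^ 2) * |ω - ω'| := by
  have hω0 : 0 < ω := hm.trans_le hω
  have hω'0 : 0 < ω' := hm.trans_le hω'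
  have e : Real.sin (ω * x) / ω - Real.sin (ω' * x) / ω' =
      (Real.sin (ω * x) - Real.sin (ω' * x)) / ω +
        Real.sin (ω' * x) * ((ω' - ω) / (ω * ω')) := by
    field_simp; ring
  rw [e]
  have hA : |(Real.sin (ω * x) - Real.sin (ω' * x)) / ω| ≤ b / m * |ω - ω'| := by
    rw [abs_div, abs_of_pos hω0]
    have hnum : |Real.sin (ω * x) - Real.sin (ω' * x)| ≤ x * |ω - ω'| := by
      calc |Real.sin (ω * x) - Real.sin (ω' * x)| ≤ |ω * x - ω' * x| := lip_sin _ _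
        _ = x * |ω - ω'| := by rw [show ω * x - ω' * x = (ω - ω') * x by ring, abs_mul,
              abs_of_nonneg hx]; ring
    calc |Real.sin (ω * x) - Real.sin (ω' * x)| / ω ≤ (x * |ω - ω'|) / m := by
          apply div_le_div₀ (by positivity) hnum hm hω
      _ ≤ (b * |ω - ω'|) / m := by gcongr
      _ = b / m * |ω - ω'| := by ring
  have hB : |Real.sin (ω' * x) * ((ω' - ω) / (ω * ω'))| ≤ 1 / m ^ 2 * |ω - ω'| := by
    rw [abs_mul, abs_div, abs_sub_comm ω' ω, abs_of_pos (mul_pos hω0 hω'0)]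
    have hden : m ^ 2 ≤ ω * ω' := by nlinarith
    calc |Real.sin (ω' * x)| * (|ω - ω'| / (ω * ω'))
        ≤ 1 * (|ω - ω'| / m ^ 2) := by
          apply mul_le_mul (Real.abs_sin_le_one _) ?_ (by positivity) zero_le_one
          exact div_le_div_of_nonneg_left (abs_nonneg _) (by positivity) hden
      _ = 1 / m ^ 2 * |ω - ω'| := by ring
  calc |(Real.sin (ω * x) - Real.sin (ω' * x)) / ω +
        Real.sin (ω' * x) * ((ω' - ω) / (ω * ω'))|
      ≤ |(Real.sin (ω * x) - Real.sin (ω' * x)) / ω| +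
        |Real.sin (ω' * x) * ((ω' - ω) / (ω * ω'))| := abs_add_le _ _
    _ ≤ b / m * |ω - ω'| + 1 / m ^ 2 * |ω - ω'| := add_le_add hA hB
    _ = (b / m + 1 / m ^ 2) * |ω - ω'| := by ring

lemma A_lip (c₂ b m ω ω' r : ℝ) (hm : 0 < m) (hb : 0 ≤ b)
    (hω : m ≤ ω) (hω' : m ≤ ω') (hr : 0 ≤ r) (hrb : r ≤ b) :
    |A1f c₂ ω r - A1f c₂ ω' r| ≤
      ((|1 - c₂| + |c₂|) * (2 * (1 + b) * ((1 + b) * (1 + 1/m + 1/m^2)))) * |ω - ω'| ∧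
    |A2f c₂ ω r - A2f c₂ ω' r| ≤
      ((|1 - c₂| + |c₂|) * (2 * (1 + b) * ((1 + b) * (1 + 1/m + 1/m^2)))) * |ω - ω'| := by
  have hω0 : 0 < ω := hm.trans_le hω
  have hω'0 : 0 < ω' := hm.trans_le hω'
  set D : ℝ := (1 + b) * (1 + 1/m + 1/m^2) with hDdef
  set δ : ℝ := |ω - ω'| with hδdef
  have hδ0 : 0 ≤ δ := abs_nonneg _
  have hm1 : 0 < 1/m := by positivity
  have hm2 : 0 < 1/m^2 := by positivity
  have hD1 : 1 ≤ D := by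
    rw [hDdef]; nlinarith [mul_nonneg hb hm1.le, mul_nonneg hb hm2.le]
  have hD2 : b ≤ D := by
    rw [hDdef]; nlinarith [mul_nonneg hb hm1.le, mul_nonneg hb hm2.le]
  have hD3 : b/m + 1/m^2 ≤ D := by
    rw [hDdef]
    have e1 : b/m = b * (1/m) := by ring
    nlinarith [mul_nonneg hb hm1.le, mul_nonneg hb hm2.le]
  have hD4 : 1/m + 1/m^2 ≤ D := by
    rw [hDdef]; nlinarith [mul_nonneg hb hm1.le, mul_nonneg hb hm2.le]
  have hmulδ : ∀ a : ℝ, a ≤ D → a * δ ≤ D * δ := fun a ha =>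
    mul_le_mul_of_nonneg_right ha hδ0
  have δc1 : |Real.cos ω - Real.cos ω'| ≤ D * δ :=
    (lip_cos _ _).trans (by simpa using hmulδ 1 hD1)
  have δs1 : |Real.sin ω - Real.sin ω'| ≤ D * δ :=
    (lip_sin _ _).trans (by simpa using hmulδ 1 hD1)
  have hrmul : |ω * r - ω' * r| = r * δ := by
    rw [show ω * r - ω' * r = (ω - ω') * r by ring, abs_mul, abs_of_nonneg hr, hδdef]; ring
  have δc2 : |Real.cos (ω * r) - Real.cos (ω' * r)| ≤ D * δ := by
    refine (lip_cos _ _).trans ?_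
    rw [hrmul]
    exact mul_le_mul_of_nonneg_right (hrb.trans hD2) hδ0
  have δs2 : |Real.sin (ω * r) - Real.sin (ω' * r)| ≤ D * δ := by
    refine (lip_sin _ _).trans ?_
    rw [hrmul]
    exact mul_le_mul_of_nonneg_right (hrb.trans hD2) hδ0
  have δq2 : |Real.sin (ω * r) / ω - Real.sin (ω' * r) / ω'| ≤ D * δ :=
    (sinc_diff m ω ω' r b hm hω hω' hr hrb).trans (hmulδ _ hD3)
  have δq1 : |Real.sin ω / ω - Real.sin ω' / ω'| ≤ D * δ := by
    have h := sinc_diff m ω ω' 1 1 hm hω hω' zero_le_one le_rfl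
    rw [mul_one, mul_one] at h
    exact h.trans (hmulδ _ hD4)
  have hC0 : (0:ℝ) ≤ 1 + b := by linarith
  have h1b : (1:ℝ) ≤ 1 + b := by linarith
  have pc : |Real.cos ω * Real.cos (ω * r) - Real.cos ω' * Real.cos (ω' * r)| ≤
      (1 + b) * (D * δ + D * δ) :=
    prod_diff_le _ _ _ _ _ _ _ hC0 ((Real.abs_cos_le_one _).trans h1b)
      ((Real.abs_cos_le_one _).trans h1b) δc1 δc2
  have ps : |Real.sin ω * Real.sin (ω * r) - Real.sin ω' * Real.sin (ω' * r)| ≤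
      (1 + b) * (D * δ + D * δ) :=
    prod_diff_le _ _ _ _ _ _ _ hC0 ((Real.abs_sin_le_one _).trans h1b)
      ((Real.abs_sin_le_one _).trans h1b) δs1 δs2
  have pq : |Real.cos ω * (Real.sin (ω * r) / ω) -
      Real.cos ω' * (Real.sin (ω' * r) / ω')| ≤ (1 + b) * (D * δ + D * δ) :=
    prod_diff_le _ _ _ _ _ _ _ hC0 ((Real.abs_cos_le_one _).trans h1b)
      ((sinc_le ω r hω0 hr).trans (by linarith)) δc1 δq2
  have pq2 : |(Real.sin ω / ω) * Real.cos (ω * r) -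
      (Real.sin ω' / ω') * Real.cos (ω' * r)| ≤ (1 + b) * (D * δ + D * δ) := by
    refine prod_diff_le _ _ _ _ _ _ _ hC0 ?_ ((Real.abs_cos_le_one _).trans h1b) δq1 δc2
    have h := sinc_le ω' 1 hω'0 zero_le_one
    rw [mul_one] at h
    exact h.trans h1b
  constructor
  · have e : A1f c₂ ω r - A1f c₂ ω' r =
        (1 - c₂) * (Real.cos ω * Real.cos (ω * r) - Real.cos ω' * Real.cos (ω' * r)) -
        c₂ * (Real.sin ω * Real.sin (ω * r) - Real.sin ω' * Real.sin (ω' * r)) := by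
      unfold A1f; ring
    rw [e]
    calc |(1 - c₂) * (Real.cos ω * Real.cos (ω * r) - Real.cos ω' * Real.cos (ω' * r)) -
        c₂ * (Real.sin ω * Real.sin (ω * r) - Real.sin ω' * Real.sin (ω' * r))|
        ≤ |1 - c₂| * |Real.cos ω * Real.cos (ω * r) - Real.cos ω' * Real.cos (ω' * r)| +
          |c₂| * |Real.sin ω * Real.sin (ω * r) - Real.sin ω' * Real.sin (ω' * r)| := by
          refine (tri_sub _ _).trans ?_
          rw [abs_mul, abs_mul]
      _ ≤ |1 - c₂| * ((1 + b) * (D * δ + D * δ)) + |c₂| * ((1 + b) * (D * δ + D * δ)) :=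
          add_le_add (mul_le_mul_of_nonneg_left pc (abs_nonneg _))
            (mul_le_mul_of_nonneg_left ps (abs_nonneg _))
      _ = ((|1 - c₂| + |c₂|) * (2 * (1 + b) * ((1 + b) * (1 + 1/m + 1/m^2)))) * δ := by
          rw [hDdef]; ring
  · have e : A2f c₂ ω r - A2f c₂ ω' r =
        (1 - c₂) * (Real.cos ω * (Real.sin (ω * r) / ω) -
          Real.cos ω' * (Real.sin (ω' * r) / ω')) +
        c₂ * ((Real.sin ω / ω) * Real.cos (ω * r) -
          (Real.sin ω' / ω') * Real.cos (ω' * r)) := by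
      unfold A2f; ring
    rw [e]
    calc |(1 - c₂) * (Real.cos ω * (Real.sin (ω * r) / ω) -
          Real.cos ω' * (Real.sin (ω' * r) / ω')) +
        c₂ * ((Real.sin ω / ω) * Real.cos (ω * r) -
          (Real.sin ω' / ω') * Real.cos (ω' * r))|
        ≤ |1 - c₂| * |Real.cos ω * (Real.sin (ω * r) / ω) -
            Real.cos ω' * (Real.sin (ω' * r) / ω')| +
          |c₂| * |(Real.sin ω / ω) * Real.cos (ω * r) -
            (Real.sin ω' / ω') * Real.cos (ω' * r)| := by
          refine (abs_add_le _ _).trans ?_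
          rw [abs_mul, abs_mul]
      _ ≤ |1 - c₂| * ((1 + b) * (D * δ + D * δ)) + |c₂| * ((1 + b) * (D * δ + D * δ)) :=
          add_le_add (mul_le_mul_of_nonneg_left pq (abs_nonneg _))
            (mul_le_mul_of_nonneg_left pq2 (abs_nonneg _))
      _ = ((|1 - c₂| + |c₂|) * (2 * (1 + b) * ((1 + b) * (1 + 1/m + 1/m^2)))) * δ := by
          rw [hDdef]; ring

lemma sqrt_lip (θ ϑ' : ℝ) (hθ : 0 < θ) (h' : 0 ≤ ϑ') :
    |Real.sqrt θ - Real.sqrt ϑ'| * Real.sqrt θ ≤ |θ - ϑ'| := by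
  have h1 : Real.sqrt θ ^ 2 = θ := Real.sq_sqrt hθ.le
  have h2 : Real.sqrt ϑ' ^ 2 = ϑ' := Real.sq_sqrt h'
  have key : |Real.sqrt θ - Real.sqrt ϑ'| * (Real.sqrt θ + Real.sqrt ϑ') = |θ - ϑ'| := by
    rw [← abs_of_nonneg (add_nonneg (Real.sqrt_nonneg θ) (Real.sqrt_nonneg ϑ')), ← abs_mul]
    congr 1
    nlinarith
  nlinarith [abs_nonneg (Real.sqrt θ - Real.sqrt ϑ'), Real.sqrt_nonneg ϑ']

lemma d_bound (θ : ℝ) (hθ : 0 < θ) (d : ℝ → Fin 2 → ℝ)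
    (hd : ∀ s : ℝ, HasDerivAt d ((!![0, 1; -θ, 0]).mulVec (d s)) s) :
    ∃ B : ℝ, 0 ≤ B ∧ ∀ u : ℝ, |d u 0| ≤ B ∧ |d u 1| ≤ B := by
  have h0 : ∀ s : ℝ, HasDerivAt (fun u => d u 0) (d s 1) s := by
    intro s
    have := (ContinuousLinearMap.proj (R := ℝ) (φ := fun _ : Fin 2 => ℝ)
      (0 : Fin 2)).hasFDerivAt.comp_hasDerivAt s (hd s)
    simp [Matrix.mulVec, dotProduct, Fin.sum_univ_two] at this
    exact this
  have h1 : ∀ s : ℝ, HasDerivAt (fun u => d u 1) (-(θ * d s 0)) s := by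
    intro s
    have := (ContinuousLinearMap.proj (R := ℝ) (φ := fun _ : Fin 2 => ℝ)
      (1 : Fin 2)).hasFDerivAt.comp_hasDerivAt s (hd s)
    simp [Matrix.mulVec, dotProduct, Fin.sum_univ_two] at this
    exact this
  have hV : ∀ s : ℝ, HasDerivAt (fun u => θ * (d u 0) ^ 2 + (d u 1) ^ 2) (0:ℝ) s := by
    intro s
    have h := (((h0 s).pow 2).const_mul θ).add ((h1 s).pow 2)
    refine h.congr_deriv ?_
    push_cast
    ring
  have hconst : ∀ u : ℝ, θ * (d u 0) ^ 2 + (d u 1) ^ 2 =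
      θ * (d 0 0) ^ 2 + (d 0 1) ^ 2 := by
    intro u
    have := is_const_of_deriv_eq_zero (f := fun u => θ * (d u 0) ^ 2 + (d u 1) ^ 2)
      (fun x => (hV x).differentiableAt) (fun x => (hV x).deriv) u 0
    simpa using this
  set V0 : ℝ := θ * (d 0 0) ^ 2 + (d 0 1) ^ 2 with hV0def
  have hV0 : 0 ≤ V0 := by positivity
  refine ⟨Real.sqrt (V0 / θ) + Real.sqrt V0, by positivity, fun u => ⟨?_, ?_⟩⟩
  · have hb : (d u 0) ^ 2 ≤ V0 / θ := by
      rw [le_div_iff₀ hθ]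
      have h := hconst u
      nlinarith [sq_nonneg (d u 1)]
    calc |d u 0| = Real.sqrt ((d u 0) ^ 2) := (Real.sqrt_sq_eq_abs _).symm
      _ ≤ Real.sqrt (V0 / θ) := Real.sqrt_le_sqrt hb
      _ ≤ _ := le_add_of_nonneg_right (Real.sqrt_nonneg _)
  · have hb : (d u 1) ^ 2 ≤ V0 := by
      have h := hconst u
      nlinarith [sq_nonneg (d u 0)]
    calc |d u 1| = Real.sqrt ((d u 1) ^ 2) := (Real.sqrt_sq_eq_abs _).symm
      _ ≤ Real.sqrt V0 := Real.sqrt_le_sqrt hb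
      _ ≤ _ := le_add_of_nonneg_left (Real.sqrt_nonneg _)

end PredictorAux

attribute [local instance] Matrix.normedAddCommGroup Matrix.normedSpace

open Set Matrix

set_option maxHeartbeats 1600000 in
theorem predictor_mismatch_exponential_decay
    (θ τ c₂ : ℝ) (hθ : 0 < θ) (hτ : 0 < τ)
    (f₁ f₂ : ℝ → ℝ → Matrix (Fin 1) (Fin 2) ℝ)
    (hf₁ : ∀ ϑ > (0:ℝ), ContDiff ℝ 2 (fun x => f₁ x ϑ) ∧
      (∀ x ∈ Icc (0:ℝ) 1,
        deriv (deriv (fun y => f₁ y ϑ)) x = f₁ x ϑ * (!![0, 1; -ϑ, 0]) ^ 2) ∧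
      deriv (fun y => f₁ y ϑ) 0 = 0 ∧
      f₁ 0 ϑ = (!![1, 0] : Matrix (Fin 1) (Fin 2) ℝ))
    (hf₂ : ∀ ϑ > (0:ℝ), ContDiff ℝ 1 (fun x => f₂ x ϑ) ∧
      (∀ x ∈ Icc (0:ℝ) 1,
        deriv (fun y => f₂ y ϑ) x = -(f₂ x ϑ * (!![0, 1; -ϑ, 0]))) ∧
      f₂ 0 ϑ = (-c₂) • (!![1, 0] : Matrix (Fin 1) (Fin 2) ℝ))
    (d : ℝ → Fin 2 → ℝ)
    (hd : ∀ s : ℝ, HasDerivAt d ((!![0, 1; -θ, 0]).mulVec (d s)) s)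
    (θhat : ℝ → ℝ) (hθhatpos : ∀ r ∈ Ici (0:ℝ), 0 < θhat r)
    (dhat : ℝ → Fin 2 → ℝ)
    (M μ : ℝ) (hM : 0 < M) (hμ : 0 < μ)
    (hθhat : ∀ r ∈ Ici (0:ℝ), |θhat r - θ| ≤ M * Real.exp (-μ * r))
    (hdhat : ∀ r ∈ Ici (0:ℝ),
      Real.sqrt ((dhat r 0 - d r 0) ^ 2 + (dhat r 1 - d r 1) ^ 2)
        ≤ M * Real.exp (-μ * r))
    (Δ : ℝ → ℝ → ℝ)
    (hΔ : ∀ t s : ℝ, Δ t s =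
      ((f₁ 1 θ + f₂ 1 θ)
          * NormedSpace.exp ((s - t + τ) • (!![0, 1; -θ, 0]))).mulVec (d (t - τ)) 0
        - ((f₁ 1 (θhat (t - τ)) + f₂ 1 (θhat (t - τ)))
          * NormedSpace.exp
              ((s - t + τ) • (!![0, 1; -(θhat (t - τ)), 0]))).mulVec (dhat (t - τ)) 0) :
    ∃ M' > (0:ℝ), ∃ μ' > (0:ℝ), ∀ t > τ, ∀ s ∈ Icc (t - τ) t,
      |Δ t s| ≤ M' * Real.exp (-μ' * t) := by
  obtain ⟨B, hB0, hBd⟩ := d_bound θ hθ d hd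
  set ω : ℝ := Real.sqrt θ with hωdef
  have hωpos : 0 < ω := Real.sqrt_pos.2 hθ
  have hθω : θ = ω ^ 2 := (Real.sq_sqrt hθ.le).symm
  set m : ℝ := Real.sqrt (θ/2) with hmdef
  have hmpos : 0 < m := Real.sqrt_pos.2 (by linarith)
  set Ca : ℝ := |1 - c₂| + |c₂| with hCadef
  set Cb : ℝ := |1 - c₂| * τ + |c₂| with hCbdef
  have hCa0 : 0 ≤ Ca := by positivity
  have hCb0 : 0 ≤ Cb := by
    rw [hCbdef]; positivity
  set L : ℝ := (|1 - c₂| + |c₂|) * (2 * (1 + τ) * ((1 + τ) * (1 + 1/m + 1/m^2))) with hLdef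
  have hL0 : 0 ≤ L := by rw [hLdef]; positivity
  set K : ℝ := max (Ca + Cb + 2*(L/ω)*(B+M)) (2*((Ca+Cb)*(2*B+M))/θ) + 1 with hKdef
  have hK1 : 1 ≤ K := by
    rw [hKdef]
    have : 0 ≤ Ca + Cb + 2*(L/ω)*(B+M) := by positivity
    have := le_max_left (Ca + Cb + 2*(L/ω)*(B+M)) (2*((Ca+Cb)*(2*B+M))/θ)
    linarith
  have hK0 : 0 < K := by linarith
  refine ⟨K * M * Real.exp (μ * τ), by positivity, μ, hμ, fun t ht s hs => ?_⟩
  set u : ℝ := t - τ with hudef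
  have hu0 : (0:ℝ) ≤ u := by rw [hudef]; linarith
  have huI : u ∈ Ici (0:ℝ) := hu0
  set r : ℝ := s - t + τ with hrdef
  have hr0 : 0 ≤ r := by rw [hrdef]; have := hs.1; rw [hudef] at *; linarith [hs.1]
  have hrτ : r ≤ τ := by rw [hrdef]; linarith [hs.2]
  set θ' : ℝ := θhat u with hθ'def
  have hθ'pos : 0 < θ' := hθhatpos u huI
  set ω' : ℝ := Real.sqrt θ' with hω'def
  have hω'pos : 0 < ω' := Real.sqrt_pos.2 hθ'pos
  have hθ'ω : θ' = ω' ^ 2 := (Real.sq_sqrt hθ'pos.le).symm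
  set Eb : ℝ := M * Real.exp (-μ * u) with hEbdef
  have hEb0 : 0 < Eb := by positivity
  have hEbM : Eb ≤ M := by
    rw [hEbdef]
    nlinarith [Real.exp_le_one_iff.mpr (show -μ * u ≤ 0 by nlinarith), hM.le]
  have hθd : |θ' - θ| ≤ Eb := hθhat u huI
  have hdd0 : |dhat u 0 - d u 0| ≤ Eb := by
    have h := hdhat u huI
    calc |dhat u 0 - d u 0| = Real.sqrt ((dhat u 0 - d u 0) ^ 2) :=
          (Real.sqrt_sq_eq_abs _).symm
      _ ≤ Real.sqrt ((dhat u 0 - d u 0) ^ 2 + (dhat u 1 - d u 1) ^ 2) :=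
          Real.sqrt_le_sqrt (le_add_of_nonneg_right (sq_nonneg _))
      _ ≤ Eb := h
  have hdd1 : |dhat u 1 - d u 1| ≤ Eb := by
    have h := hdhat u huI
    calc |dhat u 1 - d u 1| = Real.sqrt ((dhat u 1 - d u 1) ^ 2) :=
          (Real.sqrt_sq_eq_abs _).symm
      _ ≤ Real.sqrt ((dhat u 0 - d u 0) ^ 2 + (dhat u 1 - d u 1) ^ 2) :=
          Real.sqrt_le_sqrt (le_add_of_nonneg_left (sq_nonneg _))
      _ ≤ Eb := h
  have hdh0 : |dhat u 0| ≤ B + M := by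
    have := (hBd u).1
    calc |dhat u 0| = |d u 0 + (dhat u 0 - d u 0)| := by ring_nf
      _ ≤ |d u 0| + |dhat u 0 - d u 0| := abs_add_le _ _
      _ ≤ B + M := add_le_add (hBd u).1 (hdd0.trans hEbM)
  have hdh1 : |dhat u 1| ≤ B + M := by
    calc |dhat u 1| = |d u 1 + (dhat u 1 - d u 1)| := by ring_nf
      _ ≤ |d u 1| + |dhat u 1 - d u 1| := abs_add_le _ _
      _ ≤ B + M := add_le_add (hBd u).2 (hdd1.trans hEbM)
  -- scalar form of Δ
  have hΔs : Δ t s = A1f c₂ ω r * d u 0 + A2f c₂ ω r * d u 1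
      - (A1f c₂ ω' r * dhat u 0 + A2f c₂ ω' r * dhat u 1) := by
    have h1 := hf₁ θ hθ
    have h2 := hf₂ θ hθ
    have h1' := hf₁ θ' hθ'pos
    have h2' := hf₂ θ' hθ'pos
    have e1 : f₁ 1 θ = Real.cos ω • E1 :=
      f1_eval θ ω hωpos hθω _ h1.1 (fun x hx => by simpa [Sc] using h1.2.1 x hx)
        h1.2.2.1 (by simpa [E1] using h1.2.2.2)
    have e2 : f₂ 1 θ = (-c₂ * Real.cos ω) • E1 + (c₂ * (Real.sin ω / ω)) • E2 :=
      f2_eval θ ω c₂ hωpos hθω _ h2.1 (fun x hx => by simpa [Sc] using h2.2.1 x hx)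
        (by simpa [E1] using h2.2.2)
    have e1' : f₁ 1 θ' = Real.cos ω' • E1 :=
      f1_eval θ' ω' hω'pos hθ'ω _ h1'.1 (fun x hx => by simpa [Sc] using h1'.2.1 x hx)
        h1'.2.2.1 (by simpa [E1] using h1'.2.2.2)
    have e2' : f₂ 1 θ' = (-c₂ * Real.cos ω') • E1 + (c₂ * (Real.sin ω' / ω')) • E2 :=
      f2_eval θ' ω' c₂ hω'pos hθ'ω _ h2'.1 (fun x hx => by simpa [Sc] using h2'.2.1 x hx)
        (by simpa [E1] using h2'.2.2)
    have e3 : NormedSpace.exp (r • (!![0, 1; -θ, 0] : M22)) =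
        Real.cos (ω * r) • (1 : M22) + (Real.sin (ω * r) / ω) • Sc θ := by
      have := exp_Sc θ ω r hωpos hθω hr0
      simpa [Sc] using this
    have e3' : NormedSpace.exp (r • (!![0, 1; -θ', 0] : M22)) =
        Real.cos (ω' * r) • (1 : M22) + (Real.sin (ω' * r) / ω') • Sc θ' := by
      have := exp_Sc θ' ω' r hω'pos hθ'ω hr0
      simpa [Sc] using this
    calc Δ t s = ((f₁ 1 θ + f₂ 1 θ)
          * NormedSpace.exp (r • (!![0, 1; -θ, 0] : M22))).mulVec (d u) 0
        - ((f₁ 1 θ' + f₂ 1 θ')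
          * NormedSpace.exp (r • (!![0, 1; -θ', 0] : M22))).mulVec (dhat u) 0 := by
          rw [hΔ t s, hrdef, hudef, hθ'def]
      _ = ((A1f c₂ ω r) • E1 + (A2f c₂ ω r) • E2).mulVec (d u) 0
        - ((A1f c₂ ω' r) • E1 + (A2f c₂ ω' r) • E2).mulVec (dhat u) 0 := by
          rw [e1, e2, e3, e1', e2', e3', G_scalar c₂ θ ω r hωpos hθω,
            G_scalar c₂ θ' ω' r hω'pos hθ'ω]
      _ = _ := by rw [mulVec_formula, mulVec_formula]
  have hA1 : |A1f c₂ ω r| ≤ Ca := A1_bound c₂ ω r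
  have hA2 : |A2f c₂ ω r| ≤ Cb := A2_bound c₂ ω r τ hωpos hr0 hrτ
  have hA1' : |A1f c₂ ω' r| ≤ Ca := A1_bound c₂ ω' r
  have hA2' : |A2f c₂ ω' r| ≤ Cb := A2_bound c₂ ω' r τ hω'pos hr0 hrτ
  have key : |Δ t s| ≤ K * Eb := by
    by_cases hcase : Eb ≤ θ/2
    · -- convergent regime
      have hθ'big : θ/2 ≤ θ' := by
        have := abs_le.mp hθd
        linarith [this.1]
      have hω'm : m ≤ ω' := by
        rw [hmdef, hω'def]
        exact Real.sqrt_le_sqrt hθ'big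
      have hωm : m ≤ ω := by
        rw [hmdef, hωdef]
        exact Real.sqrt_le_sqrt (by linarith)
      have hδ : |ω - ω'| ≤ Eb / ω := by
        rw [le_div_iff₀ hωpos]
        calc |ω - ω'| * ω ≤ |θ - θ'| := by
              have := sqrt_lip θ θ' hθ hθ'pos.le
              rw [← hωdef, ← hω'def] at this
              exact this
          _ = |θ' - θ| := abs_sub_comm _ _
          _ ≤ Eb := hθd
      obtain ⟨lip1, lip2⟩ := A_lip c₂ τ m ω ω' r hmpos hτ.le hωm hω'm hr0 hrτ
      have hLEb : L * |ω - ω'| ≤ L * (Eb / ω) := mul_le_mul_of_nonneg_left hδ hL0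
      have hlip1 : |A1f c₂ ω r - A1f c₂ ω' r| ≤ L * (Eb / ω) := by
        rw [hLdef]; exact lip1.trans (by rw [← hLdef]; exact hLEb)
      have hlip2 : |A2f c₂ ω r - A2f c₂ ω' r| ≤ L * (Eb / ω) := by
        rw [hLdef]; exact lip2.trans (by rw [← hLdef]; exact hLEb)
      have edec : Δ t s = A1f c₂ ω r * (d u 0 - dhat u 0) + A2f c₂ ω r * (d u 1 - dhat u 1)
          + (A1f c₂ ω r - A1f c₂ ω' r) * dhat u 0
          + (A2f c₂ ω r - A2f c₂ ω' r) * dhat u 1 := by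
        rw [hΔs]; ring
      have habs1 : |A1f c₂ ω r * (d u 0 - dhat u 0)| ≤ Ca * Eb :=
        abs_mul_le _ _ _ _ hA1 (by rw [abs_sub_comm]; exact hdd0)
      have habs2 : |A2f c₂ ω r * (d u 1 - dhat u 1)| ≤ Cb * Eb :=
        abs_mul_le _ _ _ _ hA2 (by rw [abs_sub_comm]; exact hdd1)
      have habs3 : |(A1f c₂ ω r - A1f c₂ ω' r) * dhat u 0| ≤ (L * (Eb / ω)) * (B + M) :=
        abs_mul_le _ _ _ _ hlip1 hdh0
      have habs4 : |(A2f c₂ ω r - A2f c₂ ω' r) * dhat u 1| ≤ (L * (Eb / ω)) * (B + M) :=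
        abs_mul_le _ _ _ _ hlip2 hdh1
      calc |Δ t s| ≤ |A1f c₂ ω r * (d u 0 - dhat u 0)|
            + |A2f c₂ ω r * (d u 1 - dhat u 1)|
            + |(A1f c₂ ω r - A1f c₂ ω' r) * dhat u 0|
            + |(A2f c₂ ω r - A2f c₂ ω' r) * dhat u 1| := by
            rw [edec]
            exact (abs_add_le _ _).trans (add_le_add ((abs_add_le _ _).trans
              (add_le_add ((abs_add_le _ _).trans (add_le_add le_rfl le_rfl)) le_rfl)) le_rfl)
        _ ≤ Ca * Eb + Cb * Eb + (L * (Eb / ω)) * (B + M) + (L * (Eb / ω)) * (B + M) := by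
            exact add_le_add (add_le_add (add_le_add habs1 habs2) habs3) habs4
        _ = (Ca + Cb + 2*(L/ω)*(B+M)) * Eb := by ring
        _ ≤ K * Eb := by
            refine mul_le_mul_of_nonneg_right ?_ hEb0.le
            rw [hKdef]
            have := le_max_left (Ca + Cb + 2*(L/ω)*(B+M)) (2*((Ca+Cb)*(2*B+M))/θ)
            linarith
    · -- crude regime
      push_neg at hcase
      have hcrude : |Δ t s| ≤ (Ca+Cb)*(2*B+M) := by
        rw [hΔs]
        have habs1 : |A1f c₂ ω r * d u 0| ≤ Ca * B := abs_mul_le _ _ _ _ hA1 (hBd u).1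
        have habs2 : |A2f c₂ ω r * d u 1| ≤ Cb * B := abs_mul_le _ _ _ _ hA2 (hBd u).2
        have habs3 : |A1f c₂ ω' r * dhat u 0| ≤ Ca * (B + M) := abs_mul_le _ _ _ _ hA1' hdh0
        have habs4 : |A2f c₂ ω' r * dhat u 1| ≤ Cb * (B + M) := abs_mul_le _ _ _ _ hA2' hdh1
        calc |A1f c₂ ω r * d u 0 + A2f c₂ ω r * d u 1
            - (A1f c₂ ω' r * dhat u 0 + A2f c₂ ω' r * dhat u 1)|
            ≤ |A1f c₂ ω r * d u 0 + A2f c₂ ω r * d u 1|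
              + |A1f c₂ ω' r * dhat u 0 + A2f c₂ ω' r * dhat u 1| := tri_sub _ _
          _ ≤ (|A1f c₂ ω r * d u 0| + |A2f c₂ ω r * d u 1|)
              + (|A1f c₂ ω' r * dhat u 0| + |A2f c₂ ω' r * dhat u 1|) :=
              add_le_add (abs_add_le _ _) (abs_add_le _ _)
          _ ≤ (Ca * B + Cb * B) + (Ca * (B + M) + Cb * (B + M)) :=
              add_le_add (add_le_add habs1 habs2) (add_le_add habs3 habs4)
          _ = (Ca+Cb)*(2*B+M) := by ring
      have hfac : (Ca+Cb)*(2*B+M) ≤ (2*((Ca+Cb)*(2*B+M))/θ) * Eb := by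
        rw [div_mul_eq_mul_div, le_div_iff₀ hθ]
        have h0 : 0 ≤ (Ca+Cb)*(2*B+M) := by positivity
        nlinarith
      calc |Δ t s| ≤ (Ca+Cb)*(2*B+M) := hcrude
        _ ≤ (2*((Ca+Cb)*(2*B+M))/θ) * Eb := hfac
        _ ≤ K * Eb := by
            refine mul_le_mul_of_nonneg_right ?_ hEb0.le
            rw [hKdef]
            have := le_max_right (Ca + Cb + 2*(L/ω)*(B+M)) (2*((Ca+Cb)*(2*B+M))/θ)
            linarith
  calc |Δ t s| ≤ K * Eb := key
    _ = K * M * Real.exp (μ * τ) * Real.exp (-μ * t) := by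
        rw [hEbdef, hudef, show -μ * (t - τ) = μ * τ + -μ * t by ring, Real.exp_add]
        ring
end

section
/- Let a < b be real numbers, α ∈ ℝ, and v : [0,1] × [a,b] → ℝ twice continuously differentiable with v_tt(x,t) = v_xx(x,t) on (0,1) × (a,b). Define ρ(t) = 2e^{αt}∫₀¹ x·v_x(x,t)·v_t(x,t) dx. Then ρ is differentiable on (a,b) and ρ'(t) = α·ρ(t) + e^{αt}·[v_x(1,t)² + v_t(1,t)²] − e^{αt}·∫₀¹ [v_x(x,t)² + v_t(x,t)²] dx. -/
/- STATEMENT 18: the multiplier functional ρ(t) = 2e^{αt}∫₀¹ x v_x v_t dx of a C²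
solution of v_tt = v_xx on (0,1)×(a,b) is differentiable on (a,b), with
ρ'(t) = α ρ(t) + e^{αt}[v_x(1,t)² + v_t(1,t)²] − e^{αt}∫₀¹ [v_x² + v_t²] dx. -/

open Set MeasureTheory intervalIntegral

theorem multiplier_functional_derivative (a b α : ℝ) (hab : a < b)
    (v : ℝ → ℝ → ℝ)
    (hv : ContDiff ℝ 2 (Function.uncurry v))
    (hwave : ∀ x ∈ Ioo (0:ℝ) 1, ∀ t ∈ Ioo a b,
      deriv (deriv (v x)) t = deriv (deriv (fun y => v y t)) x)
    (ρ : ℝ → ℝ)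
    (hρ : ∀ t : ℝ, ρ t = 2 * Real.exp (α * t) *
      ∫ x in (0:ℝ)..1, x * deriv (fun y => v y t) x * deriv (v x) t) :
    ∀ t ∈ Ioo a b,
      HasDerivAt ρ
        (α * ρ t
          + Real.exp (α * t) * ((deriv (fun y => v y t) 1) ^ 2 + (deriv (v 1) t) ^ 2)
          - Real.exp (α * t) *
              ∫ x in (0:ℝ)..1, ((deriv (fun y => v y t) x) ^ 2 + (deriv (v x) t) ^ 2))
        t := by
  intro t₀ ht₀
  set u := Function.uncurry v with hu
  set D := fderiv ℝ u with hD
  set D2 := fderiv ℝ D with hD2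
  have hu1 : Differentiable ℝ u := hv.differentiable (by norm_num)
  have hDC1 : ContDiff ℝ 1 D := hv.fderiv_right (by norm_num)
  have hD' : Differentiable ℝ D := hDC1.differentiable one_ne_zero
  have hDcont : Continuous D := hDC1.continuous
  have hD2cont : Continuous D2 := hDC1.continuous_fderiv one_ne_zero
  set e1 : ℝ × ℝ := (1, 0) with he1
  set e2 : ℝ × ℝ := (0, 1) with he2
  have hvx : ∀ x t : ℝ, HasDerivAt (fun y => v y t) (D (x, t) e1) x := by
    intro x t
    have h1 : HasDerivAt (fun y : ℝ => (y, t)) e1 x :=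
      (hasDerivAt_id x).prodMk (hasDerivAt_const x t)
    exact ((hu1 (x, t)).hasFDerivAt.comp_hasDerivAt x h1)
  have hvt : ∀ x t : ℝ, HasDerivAt (v x) (D (x, t) e2) t := by
    intro x t
    have h1 : HasDerivAt (fun s : ℝ => (x, s)) e2 t :=
      (hasDerivAt_const t x).prodMk (hasDerivAt_id t)
    exact ((hu1 (x, t)).hasFDerivAt.comp_hasDerivAt t h1)
  have hdvx : ∀ x t : ℝ, deriv (fun y => v y t) x = D (x, t) e1 := fun x t => (hvx x t).deriv
  have hdvt : ∀ x t : ℝ, deriv (v x) t = D (x, t) e2 := fun x t => (hvt x t).deriv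
  have hDw : ∀ (w : ℝ × ℝ) (p : ℝ × ℝ),
      HasFDerivAt (fun q => D q w) ((ContinuousLinearMap.apply ℝ ℝ w).comp (D2 p)) p :=
    fun w p => (ContinuousLinearMap.apply ℝ ℝ w).hasFDerivAt.comp p (hD' p).hasFDerivAt
  have hvw_t : ∀ (w : ℝ × ℝ) (x t : ℝ),
      HasDerivAt (fun s => D (x, s) w) (D2 (x, t) e2 w) t := by
    intro w x t
    have h1 : HasDerivAt (fun s : ℝ => (x, s)) e2 t :=
      (hasDerivAt_const t x).prodMk (hasDerivAt_id t)
    exact (hDw w (x, t)).comp_hasDerivAt t h1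
  have hvw_x : ∀ (w : ℝ × ℝ) (x t : ℝ),
      HasDerivAt (fun y => D (y, t) w) (D2 (x, t) e1 w) x := by
    intro w x t
    have h1 : HasDerivAt (fun y : ℝ => (y, t)) e1 x :=
      (hasDerivAt_id x).prodMk (hasDerivAt_const x t)
    exact (hDw w (x, t)).comp_hasDerivAt x h1
  have hsymm : ∀ (p : ℝ × ℝ) (w z : ℝ × ℝ), D2 p w z = D2 p z w := fun p w z =>
    second_derivative_symmetric (fun q => (hu1 q).hasFDerivAt) ((hD' p).hasFDerivAt) w z
  -- wave equation in terms of D2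
  have hwave' : ∀ x ∈ Ioo (0:ℝ) 1, D2 (x, t₀) e2 e2 = D2 (x, t₀) e1 e1 := by
    intro x hx
    have h1 : deriv (v x) = fun s => D (x, s) e2 := funext fun s => hdvt x s
    have h2 : deriv (fun y => v y t₀) = fun y => D (y, t₀) e1 := funext fun y => hdvx y t₀
    have := hwave x hx t₀ ht₀
    rw [h1, h2, (hvw_t e2 x t₀).deriv, (hvw_x e1 x t₀).deriv] at this
    exact this
  -- continuity helpers
  have hcont_D : ∀ w : ℝ × ℝ, Continuous (fun p : ℝ × ℝ => D p w) :=
    fun w => hDcont.clm_apply continuous_const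
  have hcont_D2 : ∀ w z : ℝ × ℝ, Continuous (fun p : ℝ × ℝ => D2 p w z) :=
    fun w z => (hD2cont.clm_apply continuous_const).clm_apply continuous_const
  -- the parametric integral
  set F : ℝ → ℝ → ℝ := fun t x => x * D (x, t) e1 * D (x, t) e2 with hF
  set F' : ℝ → ℝ → ℝ := fun t x =>
    x * (D2 (x, t) e2 e1 * D (x, t) e2 + D (x, t) e1 * D2 (x, t) e2 e2) with hF'
  have hcontF : ∀ t, Continuous (F t) := by
    intro t
    exact (continuous_id.mul ((hcont_D e1).comp (continuous_id.prodMk continuous_const))).mul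
      ((hcont_D e2).comp (continuous_id.prodMk continuous_const))
  have hcontF'2 : Continuous (fun p : ℝ × ℝ => F' p.2 p.1) := by
    have h1 : Continuous (fun p : ℝ × ℝ => D2 p e2 e1 * D p e2 + D p e1 * D2 p e2 e2) :=
      ((hcont_D2 e2 e1).mul (hcont_D e2)).add ((hcont_D e1).mul (hcont_D2 e2 e2))
    exact continuous_fst.mul (h1.comp continuous_id)
  have hcontF' : ∀ t, Continuous (F' t) := by
    intro t
    exact hcontF'2.comp (continuous_id.prodMk continuous_const)
  have hdiffF : ∀ x t : ℝ, HasDerivAt (fun s => F s x) (F' t x) t := by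
    intro x t
    have hA := hvw_t e1 x t
    have hB := hvw_t e2 x t
    have := (((hasDerivAt_const t x).mul hA).mul hB)
    refine this.congr_deriv ?_
    simp only [hF', Pi.mul_apply]
    ring
  -- bound on a compact neighborhood
  obtain ⟨C, hC⟩ : ∃ C, ∀ p ∈ (Icc (0:ℝ) 1) ×ˢ (Icc (t₀ - 1) (t₀ + 1)),
      ‖F' p.2 p.1‖ ≤ C := by
    rcases (isCompact_Icc.prod isCompact_Icc).exists_bound_of_continuousOn
      hcontF'2.continuousOn with ⟨C, hC⟩
    exact ⟨C, hC⟩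
  have key := intervalIntegral.hasDerivAt_integral_of_dominated_loc_of_deriv_le
    (F := F) (F' := F') (x₀ := t₀) (a := 0) (b := 1) (μ := volume)
    (bound := fun _ => C) (s := Metric.ball t₀ 1) (Metric.ball_mem_nhds t₀ one_pos)
    (Filter.Eventually.of_forall fun t => (hcontF t).aestronglyMeasurable)
    ((hcontF t₀).intervalIntegrable 0 1)
    ((hcontF' t₀).aestronglyMeasurable)
    (Filter.Eventually.of_forall fun x hx t ht => by
      have hx' : x ∈ Icc (0:ℝ) 1 := by
        rw [uIoc_of_le (by norm_num : (0:ℝ) ≤ 1)] at hx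
        exact ⟨le_of_lt hx.1, hx.2⟩
      have ht' : t ∈ Icc (t₀ - 1) (t₀ + 1) := by
        rw [Metric.mem_ball, Real.dist_eq, abs_lt] at ht
        constructor <;> linarith [ht.1, ht.2]
      exact hC (x, t) ⟨hx', ht'⟩)
    (intervalIntegrable_const)
    (Filter.Eventually.of_forall fun x _ t _ => hdiffF x t)
  have hI : HasDerivAt (fun t => ∫ x in (0:ℝ)..1, F t x)
      (∫ x in (0:ℝ)..1, F' t₀ x) t₀ := key.2
  -- integration by parts computation of ∫ F' t₀
  set w : ℝ → ℝ := fun x => D (x, t₀) e1 * D (x, t₀) e1 + D (x, t₀) e2 * D (x, t₀) e2 with hw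
  set w' : ℝ → ℝ := fun x =>
    D2 (x, t₀) e1 e1 * D (x, t₀) e1 + D (x, t₀) e1 * D2 (x, t₀) e1 e1 +
    (D2 (x, t₀) e1 e2 * D (x, t₀) e2 + D (x, t₀) e2 * D2 (x, t₀) e1 e2) with hw'
  have hwderiv : ∀ x : ℝ, HasDerivAt w (w' x) x := by
    intro x
    have hA := hvw_x e1 x t₀
    have hB := hvw_x e2 x t₀
    exact (hA.mul hA).add (hB.mul hB)
  have hcontw : Continuous w :=
    (((hcont_D e1).comp (continuous_id.prodMk continuous_const)).mul
      ((hcont_D e1).comp (continuous_id.prodMk continuous_const))).add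
    (((hcont_D e2).comp (continuous_id.prodMk continuous_const)).mul
      ((hcont_D e2).comp (continuous_id.prodMk continuous_const)))
  have hcontw' : Continuous w' := by
    have c1 := (hcont_D2 e1 e1).comp (continuous_id.prodMk (continuous_const (y := t₀)))
    have c2 := (hcont_D e1).comp (continuous_id.prodMk (continuous_const (y := t₀)))
    have c3 := (hcont_D2 e1 e2).comp (continuous_id.prodMk (continuous_const (y := t₀)))
    have c4 := (hcont_D e2).comp (continuous_id.prodMk (continuous_const (y := t₀)))
    exact ((c1.mul c2).add (c2.mul c1)).add ((c3.mul c4).add (c4.mul c3))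
  have hIBP : ∫ x in (0:ℝ)..1, (fun y => y / 2) x * w' x
      = (1 / 2) * w 1 - (0 / 2) * w 0 - ∫ x in (0:ℝ)..1, (1 / 2) * w x := by
    exact intervalIntegral.integral_mul_deriv_eq_deriv_mul
      (fun x _ => (hasDerivAt_id x).div_const 2)
      (fun x _ => hwderiv x)
      (intervalIntegrable_const)
      (hcontw'.intervalIntegrable 0 1)
  have hae : ∀ᵐ (x : ℝ) ∂volume, x ∈ Set.uIoc (0:ℝ) 1 → F' t₀ x = (fun y => y / 2) x * w' x := by
    have h1 : ∀ᵐ (x : ℝ) ∂volume, x ≠ 1 := by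
      rw [MeasureTheory.ae_iff]
      simp only [ne_eq, not_not, Set.setOf_eq_eq_singleton]
      exact Real.volume_singleton
    filter_upwards [h1] with x hx1 hx
    rw [uIoc_of_le (by norm_num : (0:ℝ) ≤ 1)] at hx
    have hxI : x ∈ Ioo (0:ℝ) 1 := ⟨hx.1, lt_of_le_of_ne hx.2 hx1⟩
    simp only [hF', hw']
    rw [hwave' x hxI, hsymm (x, t₀) e2 e1]
    ring
  have hJ : ∫ x in (0:ℝ)..1, F' t₀ x
      = (1 / 2) * w 1 - (1 / 2) * ∫ x in (0:ℝ)..1, w x := by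
    rw [intervalIntegral.integral_congr_ae hae, hIBP,
      intervalIntegral.integral_const_mul]
    ring
  -- assemble the derivative of ρ
  have hexp : HasDerivAt (fun t => 2 * Real.exp (α * t)) (2 * (Real.exp (α * t₀) * α)) t₀ := by
    have h1 : HasDerivAt (fun t : ℝ => α * t) α t₀ := by
      simpa using (hasDerivAt_id t₀).const_mul α
    exact (h1.exp).const_mul 2
  have hG : HasDerivAt (fun t => 2 * Real.exp (α * t) * ∫ x in (0:ℝ)..1, F t x)
      (2 * (Real.exp (α * t₀) * α) * (∫ x in (0:ℝ)..1, F t₀ x)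
        + 2 * Real.exp (α * t₀) * ∫ x in (0:ℝ)..1, F' t₀ x) t₀ := hexp.mul hI
  have hρF : ∀ t, ρ t = 2 * Real.exp (α * t) * ∫ x in (0:ℝ)..1, F t x := by
    intro t
    rw [hρ t]
    congr 1
    apply intervalIntegral.integral_congr
    intro x _
    simp only [hF, hdvx, hdvt]
  have hfun : ρ = fun t => 2 * Real.exp (α * t) * ∫ x in (0:ℝ)..1, F t x := funext hρF
  have hρ' : HasDerivAt ρ
      (2 * (Real.exp (α * t₀) * α) * (∫ x in (0:ℝ)..1, F t₀ x)
        + 2 * Real.exp (α * t₀) * ∫ x in (0:ℝ)..1, F' t₀ x) t₀ := hfun ▸ hG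
  have hintw : (∫ x in (0:ℝ)..1, ((deriv (fun y => v y t₀) x) ^ 2 + (deriv (v x) t₀) ^ 2))
      = ∫ x in (0:ℝ)..1, w x := by
    apply intervalIntegral.integral_congr
    intro x _
    simp only [hw, hdvx, hdvt]; ring
  convert hρ' using 1
  rw [hρF t₀, hJ, hintw]
  simp only [hw, hdvx, hdvt]
  ring
end
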